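/- arXiv:2605.24819 — 9 statements merged into one kernel-verified Lean document; each statement's English description precedes it below -/
import Mathlib

section
/- Let n ≥ 2 and let P ∈ ℝ^{d×n} be a Haar–Stiefel matrix with 3 ≤ d ≤ n. Then for all unit vectors u, v ∈ ℝⁿ with ⟨u,v⟩ < 1, the expected section-efficiency ratio satisfies d/n − 4(n−d)/(n(n−1)) ≤ E[Γ(P;u,v)] ≤ d/n. -/
/-!
Rotate `(u, v)` by an orthogonal matrix `Q` to the pair `(c eᵢ + s eⱼ, c eᵢ - s eⱼ)`; since the law
of `P` is invariant under `P ↦ P Q`, this does not change `E[Γ]`. For this pair `Γ` only depends on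
the columns `x = P eᵢ`, `y = P eⱼ`, and `‖y‖² - ⟪x, y⟫² / ‖x‖² ≤ Γ ≤ ‖y‖²`. The Gram matrix
`G = Pᵀ P` is an orthogonal projection of trace `d`, and its law is invariant under simultaneous
permutations of rows and columns. Hence `E[G j j] = d / n`, and averaging the bound
`∑_{k ≠ i} G i k ² / G i i ≤ 1 - G i i` (from `G² = G`) gives
`E[G i j ² / G i i] ≤ (n - d) / (n (n - 1))`.
-/

open MeasureTheory Matrix

/-- Measurable space structure on real matrices (as a pi type). -/
instance {d n : ℕ} : MeasurableSpace (Matrix (Fin d) (Fin n) ℝ) :=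
  inferInstanceAs (MeasurableSpace (Fin d → Fin n → ℝ))

/-- Euclidean inner product on `m → ℝ`. -/
noncomputable def dotR {m : Type*} [Fintype m] (x y : m → ℝ) : ℝ := ∑ i, x i * y i

/-- Euclidean norm on `m → ℝ`. -/
noncomputable def norR {m : Type*} [Fintype m] (x : m → ℝ) : ℝ := Real.sqrt (dotR x x)

/-- The section-efficiency ratio Γ(P;u,v) = (‖Pu‖‖Pv‖ − ⟨Pu,Pv⟩)/(1 − ⟨u,v⟩). -/
noncomputable def Gam {d n : ℕ} (P : Matrix (Fin d) (Fin n) ℝ) (u v : Fin n → ℝ) : ℝ :=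
  (norR (P.mulVec u) * norR (P.mulVec v) - dotR (P.mulVec u) (P.mulVec v)) / (1 - dotR u v)

/-- `μ` is the Haar–Stiefel distribution: a probability measure supported on the
Stiefel manifold `{P : P Pᵀ = I_d}` that is invariant under right multiplication
by any orthogonal matrix.  (This characterizes the law of the first `d` rows of a
Haar-distributed orthogonal matrix.) -/
def IsHaarStiefel {d n : ℕ} (μ : Measure (Matrix (Fin d) (Fin n) ℝ)) : Prop :=
  IsProbabilityMeasure μ ∧
  (∀ᵐ P ∂μ, P * Pᵀ = 1) ∧
  ∀ Q : Matrix (Fin n) (Fin n) ℝ, Q ∈ Matrix.orthogonalGroup (Fin n) ℝ →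
    μ.map (fun P => P * Q) = μ

open scoped RealInnerProductSpace

section InnerProduct

variable {F : Type*} [NormedAddCommGroup F] [InnerProductSpace ℝ F]

lemma norm_smul_add_smul_sq (x y : F) (c s : ℝ) :
    ‖c • x + s • y‖ ^ 2 = c ^ 2 * ‖x‖ ^ 2 + 2 * c * s * ⟪x, y⟫ + s ^ 2 * ‖y‖ ^ 2 := by
  simp only [← real_inner_self_eq_norm_sq, inner_add_left, inner_add_right, real_inner_smul_left,
    real_inner_smul_right, real_inner_comm x y]
  ring

lemma norm_smul_sub_smul_sq (x y : F) (c s : ℝ) :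
    ‖c • x - s • y‖ ^ 2 = c ^ 2 * ‖x‖ ^ 2 - 2 * c * s * ⟪x, y⟫ + s ^ 2 * ‖y‖ ^ 2 := by
  simp only [← real_inner_self_eq_norm_sq, inner_sub_left, inner_sub_right, real_inner_smul_left,
    real_inner_smul_right, real_inner_comm x y]
  ring

lemma inner_smul_add_smul_smul_sub_smul (x y : F) (c s : ℝ) :
    ⟪c • x + s • y, c • x - s • y⟫ = c ^ 2 * ‖x‖ ^ 2 - s ^ 2 * ‖y‖ ^ 2 := by
  simp only [← real_inner_self_eq_norm_sq, inner_add_left, inner_sub_right, real_inner_smul_left,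
    real_inner_smul_right, real_inner_comm x y]
  ring

lemma norm_mul_norm_sub_inner_le (x y : F) (c s : ℝ) :
    ‖c • x + s • y‖ * ‖c • x - s • y‖ - ⟪c • x + s • y, c • x - s • y⟫ ≤ 2 * s ^ 2 * ‖y‖ ^ 2 := by
  nlinarith [two_mul_le_add_sq ‖c • x + s • y‖ ‖c • x - s • y‖, norm_smul_add_smul_sq x y c s,
    norm_smul_sub_smul_sq x y c s, inner_smul_add_smul_smul_sub_smul x y c s]

lemma sq_norm_sub_norm_le (x y : F) {c : ℝ} (hc : 0 ≤ c) (s : ℝ) :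
    (‖c • x + s • y‖ - ‖c • x - s • y‖) ^ 2 ≤ 4 * s ^ 2 * (⟪x, y⟫ ^ 2 / ‖x‖ ^ 2) := by
  have ha := norm_smul_add_smul_sq x y c s
  have hb := norm_smul_sub_smul_sq x y c s
  set a := c • x + s • y
  set b := c • x - s • y
  by_cases hcx : c • x = 0
  · have : ‖a‖ = ‖b‖ := by simp [a, b, hcx]
    rw [this, sub_self, zero_pow two_ne_zero]
    positivity
  have hx : 0 < ‖x‖ := norm_pos_iff.2 (right_ne_zero_of_smul hcx)
  have hc : 0 < c := hc.lt_of_ne' (left_ne_zero_of_smul hcx)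
  have hab : 2 * c * ‖x‖ ≤ ‖a‖ + ‖b‖ := by
    calc 2 * c * ‖x‖ = ‖a + b‖ := by
          rw [show a + b = (2 * c) • x by simp only [a, b]; module, norm_smul,
            Real.norm_of_nonneg (by positivity)]
      _ ≤ ‖a‖ + ‖b‖ := norm_add_le a b
  -- `(‖a‖ - ‖b‖) (‖a‖ + ‖b‖) = ‖a‖² - ‖b‖² = 4 c s ⟪x, y⟫` and `‖a‖ + ‖b‖ ≥ ‖a + b‖ = 2 c ‖x‖`
  have key : (‖a‖ - ‖b‖) ^ 2 * (2 * c * ‖x‖) ^ 2 ≤ (4 * c * s * ⟪x, y⟫) ^ 2 := by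
    calc (‖a‖ - ‖b‖) ^ 2 * (2 * c * ‖x‖) ^ 2 ≤ (‖a‖ - ‖b‖) ^ 2 * (‖a‖ + ‖b‖) ^ 2 := by gcongr
      _ = (‖a‖ ^ 2 - ‖b‖ ^ 2) ^ 2 := by ring
      _ = (4 * c * s * ⟪x, y⟫) ^ 2 := by rw [ha, hb]; ring
  rw [mul_div_assoc', le_div_iff₀ (by positivity)]
  refine le_of_mul_le_mul_left ?_ (by positivity : 0 < 4 * c ^ 2)
  linarith

lemma le_norm_mul_norm_sub_inner (x y : F) {c : ℝ} (hc : 0 ≤ c) (s : ℝ) :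
    2 * s ^ 2 * (‖y‖ ^ 2 - ⟪x, y⟫ ^ 2 / ‖x‖ ^ 2) ≤
      ‖c • x + s • y‖ * ‖c • x - s • y‖ - ⟪c • x + s • y, c • x - s • y⟫ := by
  nlinarith [sq_norm_sub_norm_le x y hc s, norm_smul_add_smul_sq x y c s,
    norm_smul_sub_smul_sq x y c s, inner_smul_add_smul_smul_sub_smul x y c s]

end InnerProduct

section Rotation

variable {E : Type*} [NormedAddCommGroup E] [InnerProductSpace ℝ E] [FiniteDimensional ℝ E]
  {ι : Type*} [Fintype ι]

lemma exists_orthonormalBasis_apply_eq (hcard : Module.finrank ℝ E = Fintype.card ι) (j : ι)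
    {q : E} (hq : ‖q‖ = 1) : ∃ b : OrthonormalBasis ι ℝ E, b j = q := by
  have hv : Orthonormal ℝ (({j} : Set ι).domRestrict fun _ => q) := by
    rw [orthonormal_iff_ite]
    rintro ⟨k, rfl⟩ ⟨l, rfl⟩
    simp [hq]
  obtain ⟨b, hb⟩ := hv.exists_orthonormalBasis_extension_of_card_eq hcard
  exact ⟨b, hb j rfl⟩

lemma exists_orthonormalBasis_apply_eq_pair (hcard : Module.finrank ℝ E = Fintype.card ι)
    {i j : ι} (hij : i ≠ j) {p q : E} (hp : ‖p‖ = 1) (hq : ‖q‖ = 1) (hpq : ⟪p, q⟫ = 0) :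
    ∃ b : OrthonormalBasis ι ℝ E, b i = p ∧ b j = q := by
  classical
  have hv : Orthonormal ℝ (({i, j} : Set ι).domRestrict fun k => if k = i then p else q) := by
    rw [orthonormal_iff_ite]
    rintro ⟨k, hk⟩ ⟨l, hl⟩
    simp only [Set.mem_insert_iff, Set.mem_singleton_iff] at hk hl
    rcases hk with rfl | rfl <;> rcases hl with rfl | rfl <;>
      simp [hij, hij.symm, hp, hq, hpq, real_inner_comm p q]
  obtain ⟨b, hb⟩ := hv.exists_orthonormalBasis_extension_of_card_eq hcard
  exact ⟨b, by simpa using hb i (by simp), by simpa [hij.symm] using hb j (by simp)⟩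

lemma exists_orthonormalBasis_eq_add_sub (hcard : Module.finrank ℝ E = Fintype.card ι)
    {i j : ι} (hij : i ≠ j) {u v : E} (hu : ‖u‖ = 1) (hv : ‖v‖ = 1) (huv : ⟪u, v⟫ < 1) :
    ∃ (b : OrthonormalBasis ι ℝ E) (c s : ℝ), 0 ≤ c ∧ 0 < s ∧ c ^ 2 + s ^ 2 = 1 ∧
      u = c • b i + s • b j ∧ v = c • b i - s • b j := by
  set c := ‖u + v‖ / 2
  set s := ‖u - v‖ / 2
  have hs : 0 < s := by
    refine half_pos (norm_pos_iff.2 (sub_ne_zero.2 fun h => ?_))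
    rw [h, real_inner_self_eq_norm_sq, hv] at huv
    norm_num at huv
  have hcs : c ^ 2 + s ^ 2 = 1 := by
    have := parallelogram_law_with_norm ℝ u v
    rw [hu, hv] at this
    simp only [c, s, div_pow]
    linarith
  set q := (2 * s)⁻¹ • (u - v)
  have hq : ‖q‖ = 1 := by
    rw [norm_smul, norm_inv, Real.norm_of_nonneg (by positivity)]
    field_simp
    ring
  have hsq : s • q = (1 / 2 : ℝ) • (u - v) := by
    simp only [q, smul_smul]; congr 1; field_simp
  obtain ⟨p, hp, hpq, hcp⟩ : ∃ p : E, ‖p‖ = 1 ∧ ⟪p, q⟫ = 0 ∧ c • p = (1 / 2 : ℝ) • (u + v) := by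
    by_cases h : u + v = 0
    · -- here `c = 0`, so any unit vector orthogonal to `q` will do
      obtain ⟨b, hb⟩ := exists_orthonormalBasis_apply_eq hcard j hq
      refine ⟨b i, b.orthonormal.1 i, hb ▸ b.orthonormal.2 hij, ?_⟩
      simp [c, h]
    · have hc : 0 < c := half_pos (norm_pos_iff.2 h)
      refine ⟨(2 * c)⁻¹ • (u + v), ?_, ?_, ?_⟩
      · rw [norm_smul, norm_inv, Real.norm_of_nonneg (by positivity)]
        field_simp
        ring
      · rw [real_inner_smul_left, real_inner_smul_right,
          (real_inner_add_sub_eq_zero_iff u v).2 (hu.trans hv.symm), mul_zero, mul_zero]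
      · simp only [smul_smul]; congr 1; field_simp
  obtain ⟨b, hbi, hbj⟩ := exists_orthonormalBasis_apply_eq_pair hcard hij hp hq hpq
  refine ⟨b, c, s, by positivity, hs, hcs, ?_, ?_⟩ <;> rw [hbi, hbj, hcp, hsq] <;> module

end Rotation

instance {d n : ℕ} : BorelSpace (Matrix (Fin d) (Fin n) ℝ) :=
  inferInstanceAs (BorelSpace (Fin d → Fin n → ℝ))

section Matrices

variable {d n : ℕ}

lemma dotR_eq_inner {m : Type*} [Fintype m] (x y : m → ℝ) :
    dotR x y = ⟪(WithLp.toLp 2 x : EuclideanSpace ℝ m), WithLp.toLp 2 y⟫ := by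
  simp [dotR, EuclideanSpace.inner_toLp_toLp, dotProduct, mul_comm]

lemma norR_eq_norm {m : Type*} [Fintype m] (x : m → ℝ) :
    norR x = ‖(WithLp.toLp 2 x : EuclideanSpace ℝ m)‖ := by
  rw [norR, dotR_eq_inner, norm_eq_sqrt_real_inner]

lemma continuous_Gam (u v : Fin n → ℝ) :
    Continuous fun P : Matrix (Fin d) (Fin n) ℝ => Gam P u v := by
  unfold Gam norR dotR
  fun_prop

lemma dotR_mulVec_of_mem_orthogonalGroup {Q : Matrix (Fin n) (Fin n) ℝ}
    (hQ : Q ∈ orthogonalGroup (Fin n) ℝ) (x y : Fin n → ℝ) :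
    dotR (Q *ᵥ x) (Q *ᵥ y) = dotR x y := by
  have hQ' : Qᵀ * Q = 1 := by simpa using (mem_orthogonalGroup_iff' (Fin n) ℝ).1 hQ
  change (Q *ᵥ x) ⬝ᵥ (Q *ᵥ y) = x ⬝ᵥ y
  rw [dotProduct_comm, dotProduct_mulVec, ← mulVec_transpose, mulVec_mulVec, hQ', one_mulVec,
    dotProduct_comm]

lemma Gam_mulVec_of_mem_orthogonalGroup (P : Matrix (Fin d) (Fin n) ℝ)
    {Q : Matrix (Fin n) (Fin n) ℝ} (hQ : Q ∈ orthogonalGroup (Fin n) ℝ) (u v : Fin n → ℝ) :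
    Gam P (Q *ᵥ u) (Q *ᵥ v) = Gam (P * Q) u v := by
  simp only [Gam, mulVec_mulVec, dotR_mulVec_of_mem_orthogonalGroup hQ]

lemma exists_orthogonal_mulVec_eq {i j : Fin n} (hij : i ≠ j) {u v : Fin n → ℝ}
    (hu : dotR u u = 1) (hv : dotR v v = 1) (huv : dotR u v < 1) :
    ∃ Q ∈ orthogonalGroup (Fin n) ℝ, ∃ c s : ℝ, 0 ≤ c ∧ 0 < s ∧ c ^ 2 + s ^ 2 = 1 ∧
      u = Q *ᵥ (c • Pi.single i 1 + s • Pi.single j 1) ∧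
      v = Q *ᵥ (c • Pi.single i 1 - s • Pi.single j 1) := by
  have hnorm : ∀ w : Fin n → ℝ, dotR w w = 1 →
      ‖(WithLp.toLp 2 w : EuclideanSpace ℝ (Fin n))‖ = 1 :=
    fun w hw => by rw [← norR_eq_norm, norR, hw, Real.sqrt_one]
  rw [dotR_eq_inner] at huv
  obtain ⟨b, c, s, hc, hs, hcs, hbu, hbv⟩ := exists_orthonormalBasis_eq_add_sub
    (by simp) hij (hnorm u hu) (hnorm v hv) huv
  set e := EuclideanSpace.basisFun (Fin n) ℝ
  have hQ : ∀ k, e.toBasis.toMatrix b *ᵥ Pi.single k 1 = WithLp.ofLp (b k) := fun k => by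
    ext l
    simp [e, Module.Basis.toMatrix_apply, OrthonormalBasis.coe_toBasis_repr_apply]
  refine ⟨_, e.toMatrix_orthonormalBasis_mem_orthogonal b, c, s, hc, hs, hcs, ?_, ?_⟩
  · rw [mulVec_add, mulVec_smul, mulVec_smul, hQ, hQ]
    simpa using congrArg WithLp.ofLp hbu
  · rw [mulVec_sub, mulVec_smul, mulVec_smul, hQ, hQ]
    simpa using congrArg WithLp.ofLp hbv

lemma inner_toLp_col (P : Matrix (Fin d) (Fin n) ℝ) (i j : Fin n) :
    ⟪(WithLp.toLp 2 (P.col i) : EuclideanSpace ℝ (Fin d)), WithLp.toLp 2 (P.col j)⟫ =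
      (Pᵀ * P) i j := by
  simp [EuclideanSpace.inner_toLp_toLp, mul_apply, dotProduct, mul_comm]

lemma norm_toLp_col_sq (P : Matrix (Fin d) (Fin n) ℝ) (j : Fin n) :
    ‖(WithLp.toLp 2 (P.col j) : EuclideanSpace ℝ (Fin d))‖ ^ 2 = (Pᵀ * P) j j := by
  rw [← real_inner_self_eq_norm_sq, inner_toLp_col]

lemma Gam_add_sub_single (P : Matrix (Fin d) (Fin n) ℝ) {i j : Fin n} (hij : i ≠ j) {c s : ℝ}
    (hcs : c ^ 2 + s ^ 2 = 1) :
    Gam P (c • Pi.single i 1 + s • Pi.single j 1) (c • Pi.single i 1 - s • Pi.single j 1) =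
      (‖c • (WithLp.toLp 2 (P.col i) : EuclideanSpace ℝ (Fin d)) + s • WithLp.toLp 2 (P.col j)‖ *
          ‖c • (WithLp.toLp 2 (P.col i) : EuclideanSpace ℝ (Fin d)) - s • WithLp.toLp 2 (P.col j)‖ -
        ⟪c • (WithLp.toLp 2 (P.col i) : EuclideanSpace ℝ (Fin d)) + s • WithLp.toLp 2 (P.col j),
          c • WithLp.toLp 2 (P.col i) - s • WithLp.toLp 2 (P.col j)⟫) / (2 * s ^ 2) := by
  have hden : dotR (c • Pi.single i 1 + s • Pi.single j 1 : Fin n → ℝ)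
      (c • Pi.single i 1 - s • Pi.single j 1) = c ^ 2 - s ^ 2 := by
    change dotProduct _ _ = _
    simp [dotProduct_sub, dotProduct_smul, hij, hij.symm]
    ring
  rw [Gam, hden, show 1 - (c ^ 2 - s ^ 2) = 2 * s ^ 2 by linarith]
  simp only [norR_eq_norm, dotR_eq_inner, mulVec_add, mulVec_sub, mulVec_smul, mulVec_single_one,
    WithLp.toLp_add, WithLp.toLp_sub, WithLp.toLp_smul]

lemma Gam_add_sub_single_le (P : Matrix (Fin d) (Fin n) ℝ) {i j : Fin n} (hij : i ≠ j) {c s : ℝ}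
    (hs : 0 < s) (hcs : c ^ 2 + s ^ 2 = 1) :
    Gam P (c • Pi.single i 1 + s • Pi.single j 1) (c • Pi.single i 1 - s • Pi.single j 1) ≤
      (Pᵀ * P) j j := by
  rw [Gam_add_sub_single P hij hcs, div_le_iff₀ (by positivity), ← norm_toLp_col_sq]
  linarith [norm_mul_norm_sub_inner_le (WithLp.toLp 2 (P.col i) : EuclideanSpace ℝ (Fin d))
    (WithLp.toLp 2 (P.col j)) c s]

lemma le_Gam_add_sub_single (P : Matrix (Fin d) (Fin n) ℝ) {i j : Fin n} (hij : i ≠ j) {c s : ℝ}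
    (hc : 0 ≤ c) (hs : 0 < s) (hcs : c ^ 2 + s ^ 2 = 1) :
    (Pᵀ * P) j j - (Pᵀ * P) i j ^ 2 / (Pᵀ * P) i i ≤
      Gam P (c • Pi.single i 1 + s • Pi.single j 1) (c • Pi.single i 1 - s • Pi.single j 1) := by
  rw [Gam_add_sub_single P hij hcs, le_div_iff₀ (by positivity), ← norm_toLp_col_sq,
    ← norm_toLp_col_sq, ← inner_toLp_col]
  linarith [le_norm_mul_norm_sub_inner (WithLp.toLp 2 (P.col i) : EuclideanSpace ℝ (Fin d))
    (WithLp.toLp 2 (P.col j)) hc s]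

section Gram

lemma gram_diag_nonneg (P : Matrix (Fin d) (Fin n) ℝ) (j : Fin n) : 0 ≤ (Pᵀ * P) j j := by
  rw [← norm_toLp_col_sq]
  positivity

lemma sum_gram_sq {P : Matrix (Fin d) (Fin n) ℝ} (hP : P * Pᵀ = 1) (j : Fin n) :
    ∑ k, (Pᵀ * P) j k ^ 2 = (Pᵀ * P) j j := by
  have hidem : (Pᵀ * P) * (Pᵀ * P) = Pᵀ * P := by
    rw [Matrix.mul_assoc, ← Matrix.mul_assoc P, hP, Matrix.one_mul]
  have hsymm : (Pᵀ * P)ᵀ = Pᵀ * P := by rw [transpose_mul, transpose_transpose]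
  conv_rhs => rw [← hidem, mul_apply]
  refine Finset.sum_congr rfl fun k _ => ?_
  rw [sq, ← transpose_apply (Pᵀ * P) j k, hsymm]

lemma sum_gram_diag {P : Matrix (Fin d) (Fin n) ℝ} (hP : P * Pᵀ = 1) : ∑ j, (Pᵀ * P) j j = d := by
  change trace (Pᵀ * P) = d
  rw [trace_mul_comm, hP, trace_one, Fintype.card_fin]

lemma gram_diag_le_one {P : Matrix (Fin d) (Fin n) ℝ} (hP : P * Pᵀ = 1) (j : Fin n) :
    (Pᵀ * P) j j ≤ 1 := by
  have h := Finset.single_le_sum (fun k _ => sq_nonneg ((Pᵀ * P) j k)) (Finset.mem_univ j)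
  rw [sum_gram_sq hP] at h
  nlinarith [gram_diag_nonneg P j]

lemma sum_gram_sq_div_le {P : Matrix (Fin d) (Fin n) ℝ} (hP : P * Pᵀ = 1) (j : Fin n) :
    ∑ k ∈ Finset.univ.erase j, (Pᵀ * P) j k ^ 2 / (Pᵀ * P) j j ≤ 1 - (Pᵀ * P) j j := by
  rw [← Finset.sum_div, Finset.sum_erase_eq_sub (Finset.mem_univ j), sum_gram_sq hP]
  rcases (gram_diag_nonneg P j).eq_or_lt with h | h
  · rw [← h]; norm_num
  · rw [div_le_iff₀ h]; nlinarith

lemma gram_sq_div_nonneg (P : Matrix (Fin d) (Fin n) ℝ) (i j : Fin n) :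
    0 ≤ (Pᵀ * P) i j ^ 2 / (Pᵀ * P) i i :=
  div_nonneg (sq_nonneg _) (gram_diag_nonneg P i)

lemma gram_sq_div_le_one {P : Matrix (Fin d) (Fin n) ℝ} (hP : P * Pᵀ = 1) {i j : Fin n}
    (hij : i ≠ j) :
    (Pᵀ * P) i j ^ 2 / (Pᵀ * P) i i ≤ 1 := by
  have h := Finset.single_le_sum (f := fun k => (Pᵀ * P) i k ^ 2 / (Pᵀ * P) i i)
    (fun k _ => gram_sq_div_nonneg P i k)
    (Finset.mem_erase.2 ⟨hij.symm, Finset.mem_univ j⟩)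
  linarith [sum_gram_sq_div_le hP i, gram_diag_nonneg P i]

lemma measurable_gram : Measurable fun P : Matrix (Fin d) (Fin n) ℝ => Pᵀ * P :=
  (continuous_id.matrix_transpose.matrix_mul continuous_id).measurable

lemma submatrix_one_mem_orthogonalGroup (σ : Equiv.Perm (Fin n)) :
    (1 : Matrix (Fin n) (Fin n) ℝ).submatrix σ id ∈ orthogonalGroup (Fin n) ℝ := by
  rw [mem_orthogonalGroup_iff]
  ext i j
  simp [mul_apply, one_apply]

lemma gram_mul_submatrix_one (P : Matrix (Fin d) (Fin n) ℝ) (σ : Equiv.Perm (Fin n)) :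
    (P * (1 : Matrix (Fin n) (Fin n) ℝ).submatrix σ.symm id)ᵀ *
      (P * (1 : Matrix (Fin n) (Fin n) ℝ).submatrix σ.symm id) = (Pᵀ * P).submatrix σ σ := by
  rw [mul_submatrix_one, transpose_submatrix, submatrix_mul _ _ _ _ _ Function.bijective_id]
  simp

end Gram

namespace IsHaarStiefel

variable {μ : Measure (Matrix (Fin d) (Fin n) ℝ)}

lemma integral_comp_mul (hμ : IsHaarStiefel μ) {Q : Matrix (Fin n) (Fin n) ℝ}
    (hQ : Q ∈ orthogonalGroup (Fin n) ℝ) {f : Matrix (Fin d) (Fin n) ℝ → ℝ}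
    (hf : AEStronglyMeasurable f μ) : ∫ P, f (P * Q) ∂μ = ∫ P, f P ∂μ := by
  have hmul : Measurable fun P : Matrix (Fin d) (Fin n) ℝ => P * Q :=
    (continuous_id.matrix_mul continuous_const).measurable
  conv_rhs => rw [← hμ.2.2 Q hQ]
  rw [integral_map hmul.aemeasurable (by rwa [hμ.2.2 Q hQ])]

lemma integral_comp_gram_submatrix (hμ : IsHaarStiefel μ) (σ : Equiv.Perm (Fin n))
    {f : Matrix (Fin n) (Fin n) ℝ → ℝ} (hf : Measurable f) :
    ∫ P, f ((Pᵀ * P).submatrix σ σ) ∂μ = ∫ P, f (Pᵀ * P) ∂μ := by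
  simp_rw [← gram_mul_submatrix_one]
  exact hμ.integral_comp_mul (submatrix_one_mem_orthogonalGroup σ.symm)
    (f := fun P => f (Pᵀ * P)) (hf.comp measurable_gram).aestronglyMeasurable

lemma integrable_of_abs_le_one (hμ : IsHaarStiefel μ) {f : Matrix (Fin d) (Fin n) ℝ → ℝ}
    (hf : Measurable f) (hle : ∀ P, P * Pᵀ = 1 → |f P| ≤ 1) : Integrable f μ := by
  have := hμ.1
  refine Integrable.of_bound hf.aestronglyMeasurable 1 ?_
  filter_upwards [hμ.2.1] with P hP using hle P hP

lemma integrable_gram_diag (hμ : IsHaarStiefel μ) (j : Fin n) :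
    Integrable (fun P => (Pᵀ * P) j j) μ :=
  hμ.integrable_of_abs_le_one
    ((by fun_prop : Measurable fun G : Matrix (Fin n) (Fin n) ℝ => G j j).comp measurable_gram)
    fun P hP => abs_le.2 ⟨by linarith [gram_diag_nonneg P j], gram_diag_le_one hP j⟩

lemma integrable_gram_sq_div (hμ : IsHaarStiefel μ) {i j : Fin n} (hij : i ≠ j) :
    Integrable (fun P => (Pᵀ * P) i j ^ 2 / (Pᵀ * P) i i) μ :=
  hμ.integrable_of_abs_le_one
    ((by fun_prop : Measurable fun G : Matrix (Fin n) (Fin n) ℝ => G i j ^ 2 / G i i).comp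
      measurable_gram)
    fun P hP => abs_le.2 ⟨by linarith [gram_sq_div_nonneg P i j], gram_sq_div_le_one hP hij⟩

lemma integral_gram_diag (hμ : IsHaarStiefel μ) (j : Fin n) :
    ∫ P, (Pᵀ * P) j j ∂μ = d / n := by
  have := hμ.1
  have hsymm : ∀ k, ∫ P, (Pᵀ * P) k k ∂μ = ∫ P, (Pᵀ * P) j j ∂μ := fun k => by
    simpa using hμ.integral_comp_gram_submatrix (Equiv.swap j k)
      (f := fun G => G j j) (by fun_prop)
  have hsum : ∑ k, ∫ P, (Pᵀ * P) k k ∂μ = d := by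
    rw [← integral_finsetSum _ fun k _ => hμ.integrable_gram_diag k,
      integral_congr_ae (g := fun _ => (d : ℝ)) ?_]
    · simp
    · filter_upwards [hμ.2.1] with P hP using sum_gram_diag hP
  have hn : (n : ℝ) ≠ 0 := by exact_mod_cast (Fin.pos j).ne'
  simp only [hsymm, Finset.sum_const, Finset.card_univ, Fintype.card_fin, nsmul_eq_mul] at hsum
  rw [← hsum]
  field_simp

lemma sum_integral_gram_sq_div_le (hμ : IsHaarStiefel μ) (i : Fin n) :
    ∑ k ∈ Finset.univ.erase i, ∫ P, (Pᵀ * P) i k ^ 2 / (Pᵀ * P) i i ∂μ ≤ 1 - d / n := by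
  have := hμ.1
  have hint : ∀ k ∈ Finset.univ.erase i,
      Integrable (fun P => (Pᵀ * P) i k ^ 2 / (Pᵀ * P) i i) μ :=
    fun k hk => hμ.integrable_gram_sq_div (Finset.mem_erase.1 hk).1.symm
  rw [← integral_finsetSum _ hint]
  calc ∫ P, ∑ k ∈ Finset.univ.erase i, (Pᵀ * P) i k ^ 2 / (Pᵀ * P) i i ∂μ
      ≤ ∫ P, (1 - (Pᵀ * P) i i) ∂μ := by
        refine integral_mono_ae (integrable_finsetSum _ hint)
          ((integrable_const 1).sub (hμ.integrable_gram_diag i)) ?_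
        filter_upwards [hμ.2.1] with P hP using sum_gram_sq_div_le hP i
    _ = 1 - d / n := by
        rw [integral_sub (integrable_const 1) (hμ.integrable_gram_diag i), hμ.integral_gram_diag i]
        simp

lemma integral_gram_sq_div_le (hμ : IsHaarStiefel μ) {i j : Fin n} (hij : i ≠ j) :
    ∫ P, (Pᵀ * P) i j ^ 2 / (Pᵀ * P) i i ∂μ ≤ (n - d) / (n * (n - 1)) := by
  have hsymm : ∀ k ∈ Finset.univ.erase i, ∫ P, (Pᵀ * P) i k ^ 2 / (Pᵀ * P) i i ∂μ =
      ∫ P, (Pᵀ * P) i j ^ 2 / (Pᵀ * P) i i ∂μ := fun k hk => by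
    simpa [Equiv.swap_apply_of_ne_of_ne hij (Finset.mem_erase.1 hk).1.symm] using
      hμ.integral_comp_gram_submatrix (Equiv.swap j k)
        (f := fun G => G i j ^ 2 / G i i) (by fun_prop)
  have hsum := hμ.sum_integral_gram_sq_div_le i
  have hn : 2 ≤ n := by
    have := Fin.val_ne_of_ne hij
    omega
  rw [Finset.sum_congr rfl hsymm, Finset.sum_const, Finset.card_erase_of_mem (Finset.mem_univ i),
    Finset.card_univ, Fintype.card_fin, nsmul_eq_mul, Nat.cast_sub (by omega), Nat.cast_one] at hsum
  have hn' : (2 : ℝ) ≤ n := by exact_mod_cast hn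
  have hnd : (n : ℝ) * (1 - d / n) = n - d := by field_simp
  rw [le_div_iff₀ (by nlinarith)]
  nlinarith [mul_le_mul_of_nonneg_left hsum (by linarith : (0 : ℝ) ≤ n)]

lemma integral_Gam_mulVec (hμ : IsHaarStiefel μ) {Q : Matrix (Fin n) (Fin n) ℝ}
    (hQ : Q ∈ orthogonalGroup (Fin n) ℝ) (u v : Fin n → ℝ) :
    ∫ P, Gam P (Q *ᵥ u) (Q *ᵥ v) ∂μ = ∫ P, Gam P u v ∂μ := by
  simp_rw [Gam_mulVec_of_mem_orthogonalGroup _ hQ]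
  exact hμ.integral_comp_mul hQ (continuous_Gam u v).measurable.aestronglyMeasurable

lemma integral_Gam_add_sub_single_bounds (hμ : IsHaarStiefel μ) {i j : Fin n} (hij : i ≠ j)
    {c s : ℝ} (hc : 0 ≤ c) (hs : 0 < s) (hcs : c ^ 2 + s ^ 2 = 1) :
    d / n - (n - d) / (n * (n - 1)) ≤
        ∫ P, Gam P (c • Pi.single i 1 + s • Pi.single j 1)
          (c • Pi.single i 1 - s • Pi.single j 1) ∂μ ∧
      ∫ P, Gam P (c • Pi.single i 1 + s • Pi.single j 1)
          (c • Pi.single i 1 - s • Pi.single j 1) ∂μ ≤ d / n := by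
  have hlow := fun P : Matrix (Fin d) (Fin n) ℝ => le_Gam_add_sub_single P hij hc hs hcs
  have hup := fun P : Matrix (Fin d) (Fin n) ℝ => Gam_add_sub_single_le P hij hs hcs
  have hint := hμ.integrable_of_abs_le_one (continuous_Gam _ _).measurable fun P hP =>
    abs_le.2 ⟨by linarith [hlow P, gram_diag_nonneg P j, gram_sq_div_le_one hP hij],
      (hup P).trans (gram_diag_le_one hP j)⟩
  have hGjj := hμ.integrable_gram_diag j
  have hW := hμ.integrable_gram_sq_div hij
  constructor
  · calc d / n - (n - d) / (n * (n - 1))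
        ≤ ∫ P, (Pᵀ * P) j j ∂μ - ∫ P, (Pᵀ * P) i j ^ 2 / (Pᵀ * P) i i ∂μ := by
          rw [hμ.integral_gram_diag]
          linarith [hμ.integral_gram_sq_div_le hij]
      _ = ∫ P, ((Pᵀ * P) j j - (Pᵀ * P) i j ^ 2 / (Pᵀ * P) i i) ∂μ := (integral_sub hGjj hW).symm
      _ ≤ _ := integral_mono (hGjj.sub hW) hint hlow
  · rw [← hμ.integral_gram_diag j]
    exact integral_mono hint hGjj hup

end IsHaarStiefel

end Matrices

theorem expected_section_efficiency_general {n d : ℕ} (hn : 2 ≤ n)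
    (μ : Measure (Matrix (Fin d) (Fin n) ℝ)) (hμ : IsHaarStiefel μ)
    (u v : Fin n → ℝ) (hu : dotR u u = 1) (hv : dotR v v = 1) (huv : dotR u v < 1) :
    (d : ℝ) / n - 4 * ((n : ℝ) - d) / (n * (n - 1)) ≤ ∫ P, Gam P u v ∂μ ∧
      ∫ P, Gam P u v ∂μ ≤ (d : ℝ) / n := by
  obtain ⟨i, j, hij⟩ : ∃ i j : Fin n, i ≠ j :=
    ⟨⟨0, by omega⟩, ⟨1, by omega⟩, by simp [Fin.ext_iff]⟩
  obtain ⟨Q, hQ, c, s, hc, hs, hcs, rfl, rfl⟩ := exists_orthogonal_mulVec_eq hij hu hv huv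
  rw [hμ.integral_Gam_mulVec hQ]
  obtain ⟨hlow, hup⟩ := hμ.integral_Gam_add_sub_single_bounds hij hc hs hcs
  have hnd : 0 ≤ ((n : ℝ) - d) / (n * (n - 1)) :=
    (integral_nonneg fun P => gram_sq_div_nonneg P i j).trans (hμ.integral_gram_sq_div_le hij)
  rw [mul_div_assoc]
  exact ⟨by linarith, hup⟩

/-- Expected section efficiency on balls:
`d/n − 4(n−d)/(n(n−1)) ≤ E[Γ(P;u,v)] ≤ d/n` for a Haar–Stiefel `P` with `3 ≤ d ≤ n`,
`n ≥ 2`, and unit vectors `u, v` with `⟨u,v⟩ < 1`. -/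
theorem expected_section_efficiency {n d : ℕ} (hn : 2 ≤ n) (hd3 : 3 ≤ d) (hdn : d ≤ n)
    (μ : Measure (Matrix (Fin d) (Fin n) ℝ)) (hμ : IsHaarStiefel μ)
    (u v : Fin n → ℝ) (hu : dotR u u = 1) (hv : dotR v v = 1) (huv : dotR u v < 1) :
    (d : ℝ) / n - 4 * ((n : ℝ) - d) / (n * (n - 1)) ≤ ∫ P, Gam P u v ∂μ ∧
      ∫ P, Gam P u v ∂μ ≤ (d : ℝ) / n :=
  expected_section_efficiency_general hn μ hμ u v hu hv huv
end

section
/- Let U ⊆ ℝⁿ be a linear subspace with orthogonal projection Π, let g ∈ ℝⁿ with Πg ≠ 0, let μ ∈ ℝⁿ be a unit vector, and let r > 0. Then the minimum of the linear functional y ↦ ⟨g, y⟩ over the ball section {y ∈ U : ‖y − rμ‖ ≤ r} is attained at y* = rΠμ − r‖Πμ‖·Πg/‖Πg‖, and the improvement satisfies 0 − min{⟨g,y⟩ : y ∈ U, ‖y − rμ‖ ≤ r} = r·(‖Πg‖·‖Πμ‖ − ⟨Πg, Πμ⟩). -/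
/-!
Write `P` for the orthogonal projection onto `U`. For `y ∈ U` Pythagoras gives
`‖y - x‖² = ‖y - P x‖² + ‖x‖² - ‖P x‖²`, so the section of the ball `B(x, ‖x‖)` by `U` is the
ball of `U` with center `P x` and radius `‖P x‖`; here `x = r μ`. On `U` the functional
`⟨g, ·⟩` coincides with `⟨P g, ·⟩`, and by Cauchy–Schwarz a linear functional `⟨q, ·⟩` is
minimized over a ball `B(c, ρ)` at `c - ρ q / ‖q‖`, with value `⟨q, c⟩ - ρ ‖q‖`.
-/

/-- The orthogonal projection onto a subspace of Euclidean space, viewed as a map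
into the ambient space. -/
noncomputable def proj {n : ℕ} (U : Submodule ℝ (EuclideanSpace ℝ (Fin n)))
    (g : EuclideanSpace ℝ (Fin n)) : EuclideanSpace ℝ (Fin n) :=
  (U.orthogonalProjection g : EuclideanSpace ℝ (Fin n))

theorem proj_eq_starProjection {n : ℕ} (U : Submodule ℝ (EuclideanSpace ℝ (Fin n)))
    (x : EuclideanSpace ℝ (Fin n)) : proj U x = U.starProjection x :=
  rfl

open RealInnerProductSpace

section Ball

variable {F : Type*} [NormedAddCommGroup F] [InnerProductSpace ℝ F]

theorem inner_sub_mul_norm_le_of_norm_sub_le {c y : F} {ρ : ℝ} (q : F) (h : ‖y - c‖ ≤ ρ) :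
    ⟪q, c⟫ - ρ * ‖q‖ ≤ ⟪q, y⟫ := by
  have hcs := real_inner_le_norm q (c - y)
  rw [inner_sub_right, norm_sub_rev] at hcs
  nlinarith [mul_le_mul_of_nonneg_left h (norm_nonneg q)]

theorem norm_sub_div_norm_smul_sub_self (c : F) (ρ : ℝ) {q : F} (hq : q ≠ 0) :
    ‖(c - (ρ / ‖q‖) • q) - c‖ = |ρ| := by
  have hq' : ‖q‖ ≠ 0 := norm_ne_zero_iff.mpr hq
  rw [sub_sub_cancel_left, norm_neg, norm_smul, Real.norm_eq_abs, abs_div, abs_norm,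
    div_mul_cancel₀ _ hq']

theorem inner_sub_div_norm_smul (c : F) (ρ : ℝ) {q : F} (hq : q ≠ 0) :
    ⟪q, c - (ρ / ‖q‖) • q⟫ = ⟪q, c⟫ - ρ * ‖q‖ := by
  have hq' : ‖q‖ ≠ 0 := norm_ne_zero_iff.mpr hq
  rw [inner_sub_right, inner_smul_right, real_inner_self_eq_norm_sq]
  field_simp

end Ball

namespace Submodule

variable {E : Type*} [NormedAddCommGroup E] [InnerProductSpace ℝ E]
  (K : Submodule ℝ E) [K.HasOrthogonalProjection]

theorem real_inner_eq_inner_starProjection_of_mem (x : E) {y : E} (hy : y ∈ K) :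
    ⟪x, y⟫ = ⟪K.starProjection x, y⟫ := by
  rw [inner_starProjection_left_eq_right, starProjection_eq_self_iff.mpr hy]

theorem norm_sub_sq_eq_of_mem {z : E} (hz : z ∈ K) (x : E) :
    ‖z - x‖ ^ 2 = ‖z - K.starProjection x‖ ^ 2 + ‖x‖ ^ 2 - ‖K.starProjection x‖ ^ 2 := by
  have hperp (w : E) (hw : w ∈ K) : ⟪w, x - K.starProjection x⟫ = 0 :=
    inner_right_of_mem_orthogonal hw (K.sub_starProjection_mem_orthogonal x)
  have hx : ‖x‖ ^ 2 = ‖K.starProjection x‖ ^ 2 + ‖x - K.starProjection x‖ ^ 2 := by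
    conv_lhs => rw [← add_sub_cancel (K.starProjection x) x]
    rw [norm_add_sq_real, hperp _ (K.starProjection_apply_mem x)]
    ring
  have hz' : z - x = (z - K.starProjection x) - (x - K.starProjection x) := by abel
  rw [hz', norm_sub_sq_real, hperp _ (K.sub_mem hz (K.starProjection_apply_mem x))]
  linarith

theorem norm_sub_le_norm_iff_of_mem {z : E} (hz : z ∈ K) (x : E) :
    ‖z - x‖ ≤ ‖x‖ ↔ ‖z - K.starProjection x‖ ≤ ‖K.starProjection x‖ := by
  rw [← sq_le_sq₀ (norm_nonneg _) (norm_nonneg _), ← sq_le_sq₀ (norm_nonneg _) (norm_nonneg _),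
    K.norm_sub_sq_eq_of_mem hz x]
  constructor <;> intro h <;> linarith

end Submodule

/-- Exact ball-section improvement (boundary base point).  With `Π` the orthogonal
projection onto the subspace `U`, `Πg ≠ 0`, `μ` a unit vector, and `r > 0`, the
linear functional `y ↦ ⟨g,y⟩` over the ball section `{y ∈ U : ‖y − rμ‖ ≤ r}`
is minimized at `y* = rΠμ − r‖Πμ‖ Πg/‖Πg‖`, and
`0 − min = r (‖Πg‖ ‖Πμ‖ − ⟨Πg,Πμ⟩)`. -/
theorem ball_section_boundary {n : ℕ} (U : Submodule ℝ (EuclideanSpace ℝ (Fin n)))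
    (g μ : EuclideanSpace ℝ (Fin n)) (hμ : ‖μ‖ = 1) (r : ℝ) (hr : 0 < r)
    (hg : proj U g ≠ 0) :
    (r • proj U μ - (r * ‖proj U μ‖ / ‖proj U g‖) • proj U g ∈ U ∧
      ‖(r • proj U μ - (r * ‖proj U μ‖ / ‖proj U g‖) • proj U g) - r • μ‖ ≤ r) ∧
    (∀ y ∈ U, ‖y - r • μ‖ ≤ r →
      (inner ℝ g (r • proj U μ - (r * ‖proj U μ‖ / ‖proj U g‖) • proj U g) : ℝ) ≤ inner ℝ g y) ∧
    0 - (inner ℝ g (r • proj U μ - (r * ‖proj U μ‖ / ‖proj U g‖) • proj U g) : ℝ) =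
      r * (‖proj U g‖ * ‖proj U μ‖ - inner ℝ (proj U g) (proj U μ)) := by
  simp only [proj_eq_starProjection] at hg ⊢
  set p := U.starProjection μ
  set q := U.starProjection g
  have hball (y) (hy : y ∈ U) : ‖y - r • μ‖ ≤ r ↔ ‖y - r • p‖ ≤ r * ‖p‖ := by
    simpa [norm_smul, hμ, abs_of_pos hr] using U.norm_sub_le_norm_iff_of_mem hy (r • μ)
  have hmem : r • p - (r * ‖p‖ / ‖q‖) • q ∈ U :=
    U.sub_mem (U.smul_mem r (U.starProjection_apply_mem μ))
      (U.smul_mem _ (U.starProjection_apply_mem g))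
  have hval := inner_sub_div_norm_smul (r • p) (r * ‖p‖) hg
  rw [← U.real_inner_eq_inner_starProjection_of_mem g hmem] at hval
  refine ⟨⟨hmem, (hball _ hmem).2 ?_⟩, fun y hy hle => ?_, ?_⟩
  · rw [norm_sub_div_norm_smul_sub_self _ _ hg, abs_of_nonneg (by positivity)]
  · rw [hval, U.real_inner_eq_inner_starProjection_of_mem g hy]
    exact inner_sub_mul_norm_le_of_norm_sub_le q ((hball y hy).1 hle)
  · rw [hval, inner_smul_right]
    ring
end

section
/- Let P ∈ ℝ^{d×n} satisfy P Pᵀ = I_d, let u, μ ∈ ℝⁿ be unit vectors with ⟨u,μ⟩ < 1, and let t ∈ [0,1]. Then γ(P;u,tμ) ≥ ((1−t)·‖Pu‖ + t·(1−⟨u,μ⟩)·Γ(P;u,μ)) / ((1−t) + t·(1−⟨u,μ⟩)), and consequently γ(P;u,tμ) ≥ min{‖Pu‖, Γ(P;u,μ)}. -/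
open Matrix

/-- The interior section-efficiency ratio
`γ(P;u,v) = (‖Pu‖√(1 − ‖v‖² + ‖Pv‖²) − ⟨Pu,Pv⟩)/(1 − ⟨u,v⟩)`. -/
noncomputable def gamInt {d n : ℕ} (P : Matrix (Fin d) (Fin n) ℝ) (u v : Fin n → ℝ) : ℝ :=
  (norR (P.mulVec u) * Real.sqrt (1 - dotR v v + dotR (P.mulVec v) (P.mulVec v)) -
      dotR (P.mulVec u) (P.mulVec v)) / (1 - dotR u v)

lemma dotR_eq_dot {m : Type*} [Fintype m] (x y : m → ℝ) : dotR x y = x ⬝ᵥ y := rfl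

lemma dot_self_nonneg' {m : Type*} [Fintype m] (x : m → ℝ) : 0 ≤ x ⬝ᵥ x :=
  Finset.sum_nonneg fun _ _ => mul_self_nonneg _

lemma mulVec_dot_aux {d n : ℕ} (P : Matrix (Fin d) (Fin n) ℝ) (x y : Fin n → ℝ) :
    P.mulVec x ⬝ᵥ P.mulVec y = x ⬝ᵥ (Pᵀ * P).mulVec y := by
  rw [← Matrix.mulVec_mulVec]
  conv_rhs => rw [Matrix.dotProduct_mulVec, Matrix.vecMul_transpose]

lemma dotR_smul_left {m : Type*} [Fintype m] (t : ℝ) (x y : m → ℝ) :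
    dotR (t • x) y = t * dotR x y := by
  simp [dotR, Finset.mul_sum, mul_assoc]

lemma dotR_smul_right {m : Type*} [Fintype m] (t : ℝ) (x y : m → ℝ) :
    dotR x (t • y) = t * dotR x y := by
  simp only [dotR, Pi.smul_apply, smul_eq_mul, Finset.mul_sum]
  exact Finset.sum_congr rfl fun i _ => by ring

set_option maxHeartbeats 1000000 in
/-- Interior ratio lower bound via a unit-direction surrogate: for `P Pᵀ = I_d`,
unit vectors `u, μ` with `⟨u,μ⟩ < 1`, and `t ∈ [0,1]`,
`γ(P;u,tμ) ≥ ((1−t)‖Pu‖ + t(1−⟨u,μ⟩)Γ(P;u,μ)) / ((1−t) + t(1−⟨u,μ⟩))`, and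
consequently `γ(P;u,tμ) ≥ min{‖Pu‖, Γ(P;u,μ)}`. -/
theorem gamma_scaled_unit_lower_bound {d n : ℕ} (P : Matrix (Fin d) (Fin n) ℝ)
    (hP : P * Pᵀ = 1) (u μ : Fin n → ℝ) (hu : dotR u u = 1) (hμ : dotR μ μ = 1)
    (huμ : dotR u μ < 1) (t : ℝ) (ht0 : 0 ≤ t) (ht1 : t ≤ 1) :
    ((1 - t) * norR (P.mulVec u) + t * (1 - dotR u μ) * Gam P u μ) /
        ((1 - t) + t * (1 - dotR u μ)) ≤ gamInt P u (t • μ) ∧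
      min (norR (P.mulVec u)) (Gam P u μ) ≤ gamInt P u (t • μ) := by
  set s := dotR u μ with hsdef
  set A := norR (P.mulVec u) with hAdef
  set c := dotR (P.mulVec u) (P.mulVec μ) with hcdef
  set B2 := dotR (P.mulVec μ) (P.mulVec μ) with hB2def
  set b := norR (P.mulVec μ) with hbdef
  -- B2 ≤ 1
  have hQ : (Pᵀ * P) * (Pᵀ * P) = Pᵀ * P := by
    rw [Matrix.mul_assoc, ← Matrix.mul_assoc P, hP, Matrix.one_mul]
  set q := (Pᵀ * P).mulVec μ with hqdef
  have e1 : B2 = μ ⬝ᵥ q := by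
    rw [hB2def, dotR_eq_dot, mulVec_dot_aux]
  have e2 : q ⬝ᵥ q = μ ⬝ᵥ q := by
    rw [hqdef, mulVec_dot_aux, Matrix.transpose_mul, Matrix.transpose_transpose,
      hQ]
  have hμ1 : μ ⬝ᵥ μ = 1 := hμ
  have hB2le1 : B2 ≤ 1 := by
    have h0 : 0 ≤ (μ - q) ⬝ᵥ (μ - q) := dot_self_nonneg' _
    have hexp : (μ - q) ⬝ᵥ (μ - q) = μ ⬝ᵥ μ - 2 * (μ ⬝ᵥ q) + q ⬝ᵥ q := by
      simp [dotProduct_sub, sub_dotProduct, dotProduct_comm q μ]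
      ring
    rw [hexp, hμ1, e2] at h0
    rw [e1]; linarith
  have hB2nn : 0 ≤ B2 := dot_self_nonneg' _
  have hA0 : 0 ≤ A := Real.sqrt_nonneg _
  have hb0 : 0 ≤ b := Real.sqrt_nonneg _
  have hb2 : b ^ 2 = B2 := Real.sq_sqrt hB2nn
  have hb1 : b ≤ 1 := by nlinarith
  have hs1 : 0 < 1 - s := by linarith
  have hD : 0 < 1 - t * s := by
    rcases eq_or_lt_of_le ht0 with h | h
    · simp [← h]
    · nlinarith
  -- rewrite gamInt
  have hPtμ : P.mulVec (t • μ) = t • P.mulVec μ := Matrix.mulVec_smul P t μ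
  have hg : gamInt P u (t • μ) =
      (A * Real.sqrt (1 - t ^ 2 + t ^ 2 * B2) - t * c) / (1 - t * s) := by
    rw [gamInt, hPtμ]
    simp only [dotR_smul_left, dotR_smul_right, hμ]
    rw [show 1 - t * (t * 1) + t * (t * B2) = 1 - t ^ 2 + t ^ 2 * B2 by ring]
  rw [hg]
  have hX : 1 - t * (1 - b) ≤ Real.sqrt (1 - t ^ 2 + t ^ 2 * B2) := by
    have h1 : 0 ≤ 1 - t * (1 - b) := by nlinarith
    have h2 : (1 - t * (1 - b)) ^ 2 ≤ 1 - t ^ 2 + t ^ 2 * B2 := by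
      nlinarith [mul_nonneg (mul_nonneg ht0 (sub_nonneg.mpr hb1)) (sub_nonneg.mpr ht1)]
    exact (Real.le_sqrt h1 (le_trans (sq_nonneg _) h2)).mpr h2
  have hGam : Gam P u μ = (A * b - c) / (1 - s) := rfl
  have hnum : (1 - t) * A + t * (A * b - c) ≤ A * Real.sqrt (1 - t ^ 2 + t ^ 2 * B2) - t * c := by
    nlinarith [mul_le_mul_of_nonneg_left hX hA0]
  have hrw : ((1 - t) * A + t * (1 - s) * Gam P u μ) / ((1 - t) + t * (1 - s)) =
      ((1 - t) * A + t * (A * b - c)) / (1 - t * s) := by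
    rw [hGam, show (1 - t) + t * (1 - s) = 1 - t * s by ring]
    congr 1
    field_simp
  have part1 : ((1 - t) * A + t * (1 - s) * Gam P u μ) / ((1 - t) + t * (1 - s)) ≤
      (A * Real.sqrt (1 - t ^ 2 + t ^ 2 * B2) - t * c) / (1 - t * s) := by
    rw [hrw]
    exact div_le_div_of_nonneg_right hnum hD.le
  refine ⟨part1, le_trans ?_ part1⟩
  rw [le_div_iff₀ (by nlinarith : (0:ℝ) < (1 - t) + t * (1 - s))]
  have h1 := min_le_left A (Gam P u μ)
  have h2 := min_le_right A (Gam P u μ)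
  nlinarith [mul_le_mul_of_nonneg_left h1 (by linarith : (0:ℝ) ≤ 1 - t),
    mul_le_mul_of_nonneg_left h2 (mul_nonneg ht0 hs1.le)]
end

section
/- Let C ⊆ ℝⁿ be a β-strongly convex set (β > 0), let x ∈ C, and let μ ∈ ℝⁿ be a unit vector such that ⟨μ, y − x⟩ ≥ 0 for all y ∈ C. Then ⟨μ, y − x⟩ ≥ β·‖y − x‖² for all y ∈ C, and consequently C is contained in the closed Euclidean ball of center x + μ/(2β) and radius 1/(2β). -/
/-- A set `C` is `β`-strongly convex if for all `x, y ∈ C` and `λ ∈ [0,1]`, the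
closed ball of center `λx + (1−λ)y` and radius `β λ(1−λ) ‖x−y‖²` is contained in `C`. -/
def StronglyConvexSet {n : ℕ} (β : ℝ) (C : Set (EuclideanSpace ℝ (Fin n))) : Prop :=
  ∀ x ∈ C, ∀ y ∈ C, ∀ l ∈ Set.Icc (0 : ℝ) 1,
    Metric.closedBall (l • x + (1 - l) • y) (β * (l * (1 - l)) * ‖x - y‖ ^ 2) ⊆ C

/-!
Push the supporting hyperplane at `x` against the balls that strong convexity places inside `C`:
the ball of radius `β l (1 - l) ‖y - x‖²` around `l x + (1 - l) y` stays on the nonnegative side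
of `⟪μ, · - x⟫`, which gives `β l ‖y - x‖² ≤ ⟪μ, y - x⟫` for every `l < 1`, hence for `l = 1`.
Expanding `‖(y - x) - μ / (2β)‖²` with this bound yields the outer ball.
-/

open Metric Filter Topology

open scoped RealInnerProductSpace

section InnerProductSpace

variable {E : Type*} [NormedAddCommGroup E] [InnerProductSpace ℝ E]

theorem le_inner_sub_of_closedBall_subset {C : Set E} {x c μ : E} {r : ℝ} (hr : 0 ≤ r)
    (hμ : ‖μ‖ = 1) (hball : closedBall c r ⊆ C) (hsupp : ∀ y ∈ C, 0 ≤ ⟪μ, y - x⟫) :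
    r ≤ ⟪μ, c - x⟫ := by
  have hmem : c - r • μ ∈ C := hball (by simp [norm_smul, hμ, abs_of_nonneg hr])
  have key := hsupp _ hmem
  rwa [sub_right_comm, inner_sub_right, real_inner_smul_right, real_inner_self_eq_norm_sq, hμ,
    one_pow, mul_one, sub_nonneg] at key

theorem norm_sub_smul_le_of_mul_sq_norm_le_inner {β : ℝ} (hβ : 0 < β) {μ v : E} (hμ : ‖μ‖ = 1)
    (h : β * ‖v‖ ^ 2 ≤ ⟪μ, v⟫) : ‖v - (1 / (2 * β)) • μ‖ ≤ 1 / (2 * β) := by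
  set t := 1 / (2 * β) with ht
  have htβ : 2 * t * β = 1 := by rw [ht]; field_simp
  have ht0 : 0 ≤ t := by positivity
  have hsq : ‖v - t • μ‖ ^ 2 ≤ t ^ 2 := by
    rw [norm_sub_sq_real, norm_smul, hμ, Real.norm_of_nonneg ht0, real_inner_smul_right,
      real_inner_comm]
    nlinarith [mul_le_mul_of_nonneg_left h (by positivity : 0 ≤ 2 * t)]
  exact (sq_le_sq₀ (norm_nonneg _) ht0).mp hsq

end InnerProductSpace

theorem le_of_forall_mem_Ico_mul_le {a b : ℝ} (h : ∀ l ∈ Set.Ico (0 : ℝ) 1, a * l ≤ b) :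
    a ≤ b := by
  have hlim : Tendsto (fun l => a * l) (𝓝[<] 1) (𝓝 a) :=
    ((continuous_const_mul a).tendsto' 1 a (mul_one a)).mono_left nhdsWithin_le_nhds
  refine le_of_tendsto hlim ?_
  filter_upwards [Ioo_mem_nhdsLT (zero_lt_one' ℝ)] with l hl
  exact h l (Set.Ioo_subset_Ico_self hl)

theorem StronglyConvexSet.mul_sq_norm_le_inner {n : ℕ} {β : ℝ} (hβ : 0 < β)
    {C : Set (EuclideanSpace ℝ (Fin n))} (hC : StronglyConvexSet β C)
    {x μ : EuclideanSpace ℝ (Fin n)} (hx : x ∈ C) (hμ : ‖μ‖ = 1)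
    (hsupp : ∀ y ∈ C, 0 ≤ ⟪μ, y - x⟫) {y : EuclideanSpace ℝ (Fin n)} (hy : y ∈ C) :
    β * ‖y - x‖ ^ 2 ≤ ⟪μ, y - x⟫ := by
  refine le_of_forall_mem_Ico_mul_le fun l ⟨hl0, hl1⟩ => ?_
  have hball := hC x hx y hy l ⟨hl0, hl1.le⟩
  have hr : 0 ≤ β * (l * (1 - l)) * ‖x - y‖ ^ 2 := by
    have := sub_nonneg.mpr hl1.le
    positivity
  have key := le_inner_sub_of_closedBall_subset hr hμ hball hsupp
  have hcenter : l • x + (1 - l) • y - x = (1 - l) • (y - x) := by module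
  rw [hcenter, real_inner_smul_right, norm_sub_rev] at key
  refine le_of_mul_le_mul_left ?_ (sub_pos.mpr hl1)
  linarith

/-- Quadratic support and outer tangent ball from strong convexity: if `C` is
`β`-strongly convex, `x ∈ C`, and `μ` is a unit vector with `⟨μ, y − x⟩ ≥ 0` on `C`,
then `⟨μ, y − x⟩ ≥ β ‖y − x‖²` on `C`, and `C` is contained in the closed ball of
center `x + μ/(2β)` and radius `1/(2β)`. -/
theorem strongly_convex_quadratic_support {n : ℕ} (β : ℝ) (hβ : 0 < β)
    (C : Set (EuclideanSpace ℝ (Fin n))) (hC : StronglyConvexSet β C)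
    (x : EuclideanSpace ℝ (Fin n)) (hx : x ∈ C)
    (μ : EuclideanSpace ℝ (Fin n)) (hμ : ‖μ‖ = 1)
    (hsupp : ∀ y ∈ C, 0 ≤ (inner ℝ μ (y - x) : ℝ)) :
    (∀ y ∈ C, β * ‖y - x‖ ^ 2 ≤ (inner ℝ μ (y - x) : ℝ)) ∧
      C ⊆ Metric.closedBall (x + (1 / (2 * β)) • μ) (1 / (2 * β)) := by
  have quadratic : ∀ y ∈ C, β * ‖y - x‖ ^ 2 ≤ ⟪μ, y - x⟫ :=
    fun y hy => hC.mul_sq_norm_le_inner hβ hx hμ hsupp hy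
  refine ⟨quadratic, fun y hy => ?_⟩
  rw [mem_closedBall, dist_eq_norm, ← sub_sub]
  exact norm_sub_smul_le_of_mul_sq_norm_le_inner hβ hμ (quadratic y hy)
end

section
/- Let C ⊆ ℝⁿ be a nonempty compact β-strongly convex set (β > 0), let x ∈ C, let μ ∈ ℝⁿ be a unit vector such that ⟨μ, y − x⟩ ≥ 0 for all y ∈ C, and let R > 0 be such that the closed ball of center x + Rμ and radius R is contained in C. Then 2βR ≤ 1, and for every g ∈ ℝⁿ with g ≠ 0, the tangent-ball gap satisfies R·‖g‖·(1 − ⟨g,μ⟩/‖g‖) ≥ 2βR · max_{y∈C} ⟨g, x − y⟩. -/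
open Filter Topology
open scoped InnerProductSpace

lemma le_of_forall_mem_Ioo_mul_le {a b : ℝ} (h : ∀ l ∈ Set.Ioo (0 : ℝ) 1, l * a ≤ b) : a ≤ b := by
  have hlim : Tendsto (fun l : ℝ => l * a) (𝓝[<] 1) (𝓝 a) := by
    have h := (continuous_mul_const a).tendsto 1
    rw [one_mul] at h
    exact h.mono_left nhdsWithin_le_nhds
  exact le_of_tendsto hlim (eventually_of_mem (Ioo_mem_nhdsLT zero_lt_one) h)

section InnerProductSpace

variable {E : Type*} [NormedAddCommGroup E] [InnerProductSpace ℝ E]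

lemma norm_sub_norm_smul_sq {μ : E} (hμ : ‖μ‖ = 1) (g : E) :
    ‖g - ‖g‖ • μ‖ ^ 2 = 2 * ‖g‖ * (‖g‖ - ⟪g, μ⟫_ℝ) := by
  rw [norm_sub_sq_real, real_inner_smul_right, norm_smul, norm_norm, hμ]
  ring

lemma two_mul_inner_sub_le_of_mul_norm_sub_sq_le_inner {β : ℝ} (hβ : 0 ≤ β) {μ : E}
    (hμ : ‖μ‖ = 1) {x y : E} (hxy : β * ‖x - y‖ ^ 2 ≤ ⟪μ, y - x⟫_ℝ) (g : E) :
    2 * β * ⟪g, x - y⟫_ℝ ≤ ‖g‖ - ⟪g, μ⟫_ℝ := by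
  rcases eq_or_ne g 0 with rfl | hg_ne
  · simp
  have hg : 0 < ‖g‖ := norm_pos_iff.mpr hg_ne
  set a := ‖g - ‖g‖ • μ‖
  set t := ‖x - y‖
  have hsplit : ⟪g, x - y⟫_ℝ = ⟪g - ‖g‖ • μ, x - y⟫_ℝ - ‖g‖ * ⟪μ, y - x⟫_ℝ := by
    rw [inner_sub_left, real_inner_smul_left, ← neg_sub x y, inner_neg_right]
    ring
  have hbound : ⟪g, x - y⟫_ℝ ≤ a * t - ‖g‖ * (β * t ^ 2) := by
    rw [hsplit]
    gcongr
    exact real_inner_le_norm _ _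
  have hquad : 2 * ‖g‖ * (2 * β * ⟪g, x - y⟫_ℝ) ≤ a ^ 2 := by
    nlinarith [mul_le_mul_of_nonneg_left hbound (by positivity : 0 ≤ 4 * β * ‖g‖),
      sq_nonneg (a - 2 * β * ‖g‖ * t)]
  rw [norm_sub_norm_smul_sq hμ] at hquad
  exact le_of_mul_le_mul_left hquad (by positivity)

lemma two_mul_mul_le_one_of_closedBall_subset {β R : ℝ} (hR : 0 < R) {μ : E} (hμ : ‖μ‖ = 1)
    {x : E} {C : Set E} (hball : Metric.closedBall (x + R • μ) R ⊆ C)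
    (hC : ∀ y ∈ C, β * ‖x - y‖ ^ 2 ≤ ⟪μ, y - x⟫_ℝ) :
    2 * β * R ≤ 1 := by
  have hfar : x + (2 * R) • μ ∈ C := hball <| by
    rw [Metric.mem_closedBall, dist_eq_norm, add_sub_add_left_eq_sub, ← sub_smul, norm_smul, hμ,
      Real.norm_of_nonneg (by linarith), mul_one, two_mul, add_sub_cancel_right]
  have h := hC _ hfar
  rw [sub_add_cancel_left, add_sub_cancel_left, norm_neg, norm_smul, hμ, mul_one,
    Real.norm_of_nonneg (by linarith), real_inner_smul_right, real_inner_self_eq_norm_sq, hμ] at h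
  nlinarith

end InnerProductSpace

namespace StronglyConvexSet

variable {n : ℕ} {β : ℝ} {C : Set (EuclideanSpace ℝ (Fin n))}

lemma mul_norm_sub_sq_le_inner (hC : StronglyConvexSet β C) (hβ : 0 ≤ β)
    {x : EuclideanSpace ℝ (Fin n)} (hx : x ∈ C) {μ : EuclideanSpace ℝ (Fin n)} (hμ : ‖μ‖ = 1)
    (hsupp : ∀ y ∈ C, 0 ≤ ⟪μ, y - x⟫_ℝ) {y : EuclideanSpace ℝ (Fin n)} (hy : y ∈ C) :
    β * ‖x - y‖ ^ 2 ≤ ⟪μ, y - x⟫_ℝ := by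
  refine le_of_forall_mem_Ioo_mul_le fun l ⟨hl0, hl1⟩ => ?_
  set r := β * (l * (1 - l)) * ‖x - y‖ ^ 2
  have hr : 0 ≤ r := by
    have : 0 ≤ l * (1 - l) := mul_nonneg hl0.le (by linarith)
    positivity
  have hmem : l • x + (1 - l) • y - r • μ ∈ C := by
    refine hC x hx y hy l ⟨hl0.le, hl1.le⟩ ?_
    rw [Metric.mem_closedBall, dist_eq_norm, sub_sub_cancel_left, norm_neg, norm_smul, hμ,
      Real.norm_of_nonneg hr, mul_one]
  have hinner : ⟪μ, l • x + (1 - l) • y - r • μ - x⟫_ℝ = (1 - l) * ⟪μ, y - x⟫_ℝ - r := by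
    have hμμ : ⟪μ, μ⟫_ℝ = 1 := by rw [real_inner_self_eq_norm_sq, hμ, one_pow]
    simp only [inner_sub_right, inner_add_right, real_inner_smul_right, hμμ]
    ring
  have h := hsupp _ hmem
  rw [hinner] at h
  have : (1 - l) * (l * (β * ‖x - y‖ ^ 2)) ≤ (1 - l) * ⟪μ, y - x⟫_ℝ := by linarith
  exact le_of_mul_le_mul_left this (by linarith)

end StronglyConvexSet

theorem ball_gap_comparability_general {n : ℕ} (β : ℝ) (hβ : 0 < β)
    (C : Set (EuclideanSpace ℝ (Fin n)))
    (hC : StronglyConvexSet β C)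
    (x : EuclideanSpace ℝ (Fin n)) (hx : x ∈ C)
    (μ : EuclideanSpace ℝ (Fin n)) (hμ : ‖μ‖ = 1)
    (hsupp : ∀ y ∈ C, 0 ≤ (inner ℝ μ (y - x) : ℝ))
    (R : ℝ) (hR : 0 < R) (hball : Metric.closedBall (x + R • μ) R ⊆ C) :
    2 * β * R ≤ 1 ∧
      ∀ g : EuclideanSpace ℝ (Fin n), g ≠ 0 →
        2 * β * R * sSup ((fun y => (inner ℝ g (x - y) : ℝ)) '' C) ≤
          R * ‖g‖ * (1 - (inner ℝ g μ : ℝ) / ‖g‖) := by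
  have hparab := fun y (hy : y ∈ C) => hC.mul_norm_sub_sq_le_inner hβ.le hx hμ hsupp hy
  refine ⟨two_mul_mul_le_one_of_closedBall_subset hR hμ hball hparab, fun g hg => ?_⟩
  have hsup : 2 * β * sSup ((fun y => (inner ℝ g (x - y) : ℝ)) '' C) ≤ ‖g‖ - inner ℝ g μ := by
    rw [← le_div_iff₀' (by positivity)]
    refine csSup_le ⟨_, x, hx, rfl⟩ ?_
    rintro _ ⟨y, hy, rfl⟩
    rw [le_div_iff₀' (by positivity)]
    exact two_mul_inner_sub_le_of_mul_norm_sub_sq_le_inner hβ.le hμ (hparab y hy) g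
  have hg_norm : ‖g‖ ≠ 0 := norm_ne_zero_iff.mpr hg
  calc 2 * β * R * sSup ((fun y => (inner ℝ g (x - y) : ℝ)) '' C)
      = R * (2 * β * sSup ((fun y => (inner ℝ g (x - y) : ℝ)) '' C)) := by ring
    _ ≤ R * (‖g‖ - inner ℝ g μ) := by gcongr
    _ = R * ‖g‖ * (1 - inner ℝ g μ / ‖g‖) := by field_simp

/-- Ball–gap comparability at a supported point: if `C` is nonempty, compact and
`β`-strongly convex, `x ∈ C`, `μ` is a unit vector supporting `C` at `x`
(`⟨μ, y − x⟩ ≥ 0` on `C`), and the closed ball `B(x + Rμ, R) ⊆ C` with `R > 0`,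
then `2βR ≤ 1` and for every `g ≠ 0`,
`R ‖g‖ (1 − ⟨g,μ⟩/‖g‖) ≥ 2βR · max_{y∈C} ⟨g, x − y⟩`. -/
theorem ball_gap_comparability {n : ℕ} (β : ℝ) (hβ : 0 < β)
    (C : Set (EuclideanSpace ℝ (Fin n))) (hne : C.Nonempty) (hcomp : IsCompact C)
    (hC : StronglyConvexSet β C)
    (x : EuclideanSpace ℝ (Fin n)) (hx : x ∈ C)
    (μ : EuclideanSpace ℝ (Fin n)) (hμ : ‖μ‖ = 1)
    (hsupp : ∀ y ∈ C, 0 ≤ (inner ℝ μ (y - x) : ℝ))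
    (R : ℝ) (hR : 0 < R) (hball : Metric.closedBall (x + R • μ) R ⊆ C) :
    2 * β * R ≤ 1 ∧
      ∀ g : EuclideanSpace ℝ (Fin n), g ≠ 0 →
        2 * β * R * sSup ((fun y => (inner ℝ g (x - y) : ℝ)) '' C) ≤
          R * ‖g‖ * (1 - (inner ℝ g μ : ℝ) / ‖g‖) :=
  ball_gap_comparability_general β hβ C hC x hx μ hμ hsupp R hR hball
end

section
/- Let C ⊆ ℝⁿ be a nonempty compact β-strongly convex set (β > 0) with diameter D > 0, and suppose there exists R_min > 0 such that: (i) for every boundary point x̄ ∈ ∂C there is a unit vector μ(x̄) with ⟨μ(x̄), y − x̄⟩ ≥ 0 for all y ∈ C and with the closed ball of center x̄ + R_min·μ(x̄) and radius R_min contained in C; and (ii) at each boundary point the unit outward normal is unique, i.e., any two unit vectors satisfying the supporting condition of (i) at x̄ coincide. Set κ := min{2βR_min, R_min/D}. Then for every x ∈ C and every g ∈ ℝⁿ with g ≠ 0, there exists a closed Euclidean ball B ⊆ C with x ∈ B such that max_{y∈B} ⟨g, x − y⟩ ≥ κ · max_{y∈C} ⟨g, x − y⟩. -/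
/-!
Let `p` minimize `⟪g, ·⟫` over `C`, so that the gap over `C` is `⟪g, x - p⟫ ≤ ‖g‖ D`, and let `z`
be a boundary point nearest to `x`, at distance `δ`, with inward normal `m`; then `x = z + δ m`,
and the rolling ball at `z` forces `2 R_min ≤ D`, whence `κ D ≤ R_min` and `κ ≤ 1`.
If `δ ≥ R_min`, the ball of radius `δ` around `x` has gap `δ ‖g‖ ≥ R_min ‖g‖ ≥ κ ⟪g, x - p⟫`.
Otherwise `x` lies in the rolling ball at `z`, whose gap is `R_min ‖g‖ + (δ - R_min) ⟪g, m⟫`.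
This suffices when `⟪g, m⟫ ≤ 0`; when `⟪g, m⟫ > 0` we use that a `β`-strongly convex set lies
in the ball of radius `1 / (2β)` tangent to it at `z`, which gives
`2β ⟪g, z - p⟫ + ⟪g, m⟫ ≤ ‖g‖`.
-/

open Metric Set Filter Topology
open scoped RealInnerProductSpace

section InnerProductSpace

variable {E : Type*} [NormedAddCommGroup E] [InnerProductSpace ℝ E]

theorem sSup_image_inner_sub_closedBall (g x c : E) {r : ℝ} (hr : 0 ≤ r) :
    sSup ((fun y => ⟪g, x - y⟫) '' closedBall c r) = ⟪g, x - c⟫ + r * ‖g‖ := by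
  rcases eq_or_ne g 0 with rfl | hg
  · simp [(nonempty_closedBall.mpr hr).image_const]
  have hg' : ‖g‖ ≠ 0 := norm_ne_zero_iff.mpr hg
  refine IsGreatest.csSup_eq ⟨⟨c - (r / ‖g‖) • g, ?_, ?_⟩, ?_⟩
  · rw [mem_closedBall, dist_eq_norm, sub_sub_cancel_left, norm_neg, norm_smul,
      Real.norm_of_nonneg (by positivity), div_mul_cancel₀ r hg']
  · dsimp only
    rw [sub_sub_eq_add_sub, add_sub_right_comm, inner_add_right, real_inner_smul_right,
      real_inner_self_eq_norm_sq]
    field_simp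
  · rintro _ ⟨y, hy, rfl⟩
    have hcy : ⟪g, c - y⟫ ≤ ‖g‖ * r :=
      (real_inner_le_norm g (c - y)).trans <| by
        rw [← dist_eq_norm, dist_comm]
        exact mul_le_mul_of_nonneg_left hy (norm_nonneg g)
    dsimp only
    rw [← sub_add_sub_cancel x c y, inner_add_right]
    linarith

theorem IsMinOn.sSup_image_inner_sub {s : Set E} {g p : E} (hp : p ∈ s)
    (hmin : IsMinOn (fun y => ⟪g, y⟫) s p) (x : E) :
    sSup ((fun y => ⟪g, x - y⟫) '' s) = ⟪g, x - p⟫ := by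
  refine IsGreatest.csSup_eq ⟨⟨p, hp, rfl⟩, ?_⟩
  rintro _ ⟨y, hy, rfl⟩
  have : ⟪g, p⟫ ≤ ⟪g, y⟫ := hmin hy
  simp only [inner_sub_right]
  linarith

theorem inner_sub_le_norm_mul_diam {s : Set E} (hs : Bornology.IsBounded s) {x p : E} (hx : x ∈ s)
    (hp : p ∈ s) (g : E) : ⟪g, x - p⟫ ≤ ‖g‖ * diam s :=
  (real_inner_le_norm _ _).trans <|
    mul_le_mul_of_nonneg_left (dist_eq_norm x p ▸ dist_le_diam_of_mem hs hx hp) (norm_nonneg g)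

theorem eq_add_smul_of_closedBall_subset {s : Set E} {x z m : E} {δ : ℝ}
    (hball : closedBall x δ ⊆ s) (hxz : dist x z ≤ δ) (hm : ‖m‖ = 1)
    (hms : ∀ y ∈ s, 0 ≤ ⟪m, y - z⟫) : x = z + δ • m := by
  have hδ : 0 ≤ δ := dist_nonneg.trans hxz
  have hinner : δ ≤ ⟪m, x - z⟫ := by
    have hmem : x - δ • m ∈ s := hball <| by
      rw [mem_closedBall, dist_eq_norm, sub_sub_cancel_left, norm_neg, norm_smul,
        Real.norm_of_nonneg hδ, hm, mul_one]
    have := hms _ hmem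
    rwa [sub_right_comm, inner_sub_right, real_inner_smul_right, real_inner_self_eq_norm_sq, hm,
      one_pow, mul_one, sub_nonneg] at this
  have hsq : ‖x - z - δ • m‖ ^ 2 ≤ 0 := by
    rw [dist_eq_norm] at hxz
    rw [norm_sub_sq_real, real_inner_smul_right, norm_smul, Real.norm_of_nonneg hδ, hm, mul_one,
      real_inner_comm]
    nlinarith [mul_self_le_mul_self (norm_nonneg _) hxz]
  rw [← sub_eq_zero, ← sub_sub, ← norm_eq_zero]
  exact pow_eq_zero_iff two_ne_zero |>.mp (le_antisymm hsq (sq_nonneg _))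

end InnerProductSpace

namespace StronglyConvexSet

variable {n : ℕ} {β : ℝ} {C : Set (EuclideanSpace ℝ (Fin n))} {y z m : EuclideanSpace ℝ (Fin n)}

theorem mul_norm_sq_le_inner (hC : StronglyConvexSet β C) (hβ : 0 ≤ β) (hz : z ∈ C)
    (hy : y ∈ C) (hm : ‖m‖ = 1) (hmC : ∀ w ∈ C, 0 ≤ ⟪m, w - z⟫) :
    β * ‖y - z‖ ^ 2 ≤ ⟪m, y - z⟫ := by
  have hseg : ∀ l ∈ Ico (0 : ℝ) 1, β * l * ‖y - z‖ ^ 2 ≤ ⟪m, y - z⟫ := by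
    rintro l ⟨hl0, hl1⟩
    set r := β * (l * (1 - l)) * ‖z - y‖ ^ 2
    have hr : 0 ≤ r := by
      have : 0 ≤ 1 - l := by linarith
      positivity
    have hmem : l • z + (1 - l) • y - r • m ∈ C := hC z hz y hy l ⟨hl0, hl1.le⟩ <| by
      rw [mem_closedBall, dist_eq_norm, sub_sub_cancel_left, norm_neg, norm_smul,
        Real.norm_of_nonneg hr, hm, mul_one]
    have := hmC _ hmem
    rw [show l • z + (1 - l) • y - r • m - z = (1 - l) • (y - z) - r • m by module,
      inner_sub_right, real_inner_smul_right, real_inner_smul_right, real_inner_self_eq_norm_sq,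
      hm, one_pow, mul_one] at this
    have hr' : r = β * (l * (1 - l)) * ‖y - z‖ ^ 2 := by rw [norm_sub_rev]
    nlinarith
  have hlim : Tendsto (fun l => β * l * ‖y - z‖ ^ 2) (𝓝[<] 1) (𝓝 (β * 1 * ‖y - z‖ ^ 2)) :=
    (Continuous.tendsto (by fun_prop) 1).mono_left nhdsWithin_le_nhds
  rw [mul_one] at hlim
  exact le_of_tendsto hlim (eventually_of_mem (Ico_mem_nhdsLT zero_lt_one) hseg)

theorem subset_closedBall (hC : StronglyConvexSet β C) (hβ : 0 < β) (hz : z ∈ C)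
    (hm : ‖m‖ = 1) (hmC : ∀ w ∈ C, 0 ≤ ⟪m, w - z⟫) :
    C ⊆ closedBall (z + (2 * β)⁻¹ • m) (2 * β)⁻¹ := by
  intro y hy
  have h := hC.mul_norm_sq_le_inner hβ.le hz hy hm hmC
  rw [mem_closedBall, dist_eq_norm, ← sq_le_sq₀ (norm_nonneg _) (by positivity),
    sub_add_eq_sub_sub, norm_sub_sq_real, real_inner_smul_right, norm_smul,
    Real.norm_of_nonneg (by positivity), hm, real_inner_comm]
  field_simp
  nlinarith [mul_le_mul_of_nonneg_left h hβ.le]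

theorem two_mul_inner_add_inner_le_norm (hC : StronglyConvexSet β C) (hβ : 0 < β) (hz : z ∈ C)
    (hy : y ∈ C) (hm : ‖m‖ = 1) (hmC : ∀ w ∈ C, 0 ≤ ⟪m, w - z⟫) (g : EuclideanSpace ℝ (Fin n)) :
    2 * β * ⟪g, z - y⟫ + ⟪g, m⟫ ≤ ‖g‖ := by
  have hy' := mem_closedBall'.mp (hC.subset_closedBall hβ hz hm hmC hy)
  rw [dist_eq_norm] at hy'
  have h := (real_inner_le_norm g _).trans (mul_le_mul_of_nonneg_left hy' (norm_nonneg g))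
  rw [add_sub_right_comm, inner_add_right, real_inner_smul_right] at h
  have := mul_le_mul_of_nonneg_left h (by positivity : (0 : ℝ) ≤ 2 * β)
  field_simp at this
  linarith

end StronglyConvexSet

theorem uniform_ball_gap_comparability_general {n : ℕ} (β : ℝ) (hβ : 0 < β)
    (C : Set (EuclideanSpace ℝ (Fin n))) (hcomp : IsCompact C)
    (hC : StronglyConvexSet β C)
    (D : ℝ) (hdiam : Metric.diam C = D)
    (Rmin : ℝ) (hRmin : 0 < Rmin)
    (hroll : ∀ z ∈ frontier C, ∃ m : EuclideanSpace ℝ (Fin n), ‖m‖ = 1 ∧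
      (∀ y ∈ C, 0 ≤ (inner ℝ m (y - z) : ℝ)) ∧
      Metric.closedBall (z + Rmin • m) Rmin ⊆ C) :
    ∀ x ∈ C, ∀ g : EuclideanSpace ℝ (Fin n), g ≠ 0 →
      ∃ (c : EuclideanSpace ℝ (Fin n)) (r : ℝ),
        Metric.closedBall c r ⊆ C ∧ x ∈ Metric.closedBall c r ∧
        min (2 * β * Rmin) (Rmin / D) * sSup ((fun y => (inner ℝ g (x - y) : ℝ)) '' C) ≤
          sSup ((fun y => (inner ℝ g (x - y) : ℝ)) '' Metric.closedBall c r) := by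
  intro x hx g hg
  have : Nontrivial (EuclideanSpace ℝ (Fin n)) := nontrivial_of_ne g 0 hg
  obtain ⟨p, hp, hpmin⟩ := hcomp.exists_isMinOn (f := fun y => ⟪g, y⟫) ⟨x, hx⟩ (by fun_prop)
  obtain ⟨z, hz, hxz⟩ := hcomp.exists_mem_frontier_infDist_compl_eq_dist hx
  have hzC : z ∈ C := hcomp.isClosed.frontier_subset hz
  obtain ⟨m, hm, hmC, hball⟩ := hroll z hz
  set δ := infDist x Cᶜ
  have hδ0 : 0 ≤ δ := infDist_nonneg
  have hδC : closedBall x δ ⊆ C :=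
    (closedBall_infDist_compl_subset_closure hx).trans hcomp.isClosed.closure_subset
  have hxzm : x = z + δ • m := eq_add_smul_of_closedBall_subset hδC hxz.ge hm hmC
  have h2R : 2 * Rmin ≤ D := by
    rw [← hdiam, ← diam_closedBall_eq (z + Rmin • m) hRmin.le]
    exact diam_mono hball hcomp.isBounded
  set κ := min (2 * β * Rmin) (Rmin / D)
  have hκD : κ * D ≤ Rmin := (le_div_iff₀ (by linarith)).mp (min_le_right _ _)
  have hgap : κ * ⟪g, x - p⟫ ≤ Rmin * ‖g‖ := by
    have hκ0 : 0 ≤ κ := le_min (by positivity) (div_nonneg hRmin.le (by linarith))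
    nlinarith [hdiam ▸ inner_sub_le_norm_mul_diam hcomp.isBounded hx hp g, norm_nonneg g]
  rw [hpmin.sSup_image_inner_sub hp]
  rcases le_or_gt Rmin δ with hRδ | hδR
  · refine ⟨x, δ, hδC, mem_closedBall_self hδ0, ?_⟩
    rw [sSup_image_inner_sub_closedBall _ _ _ hδ0, sub_self, inner_zero_right, zero_add]
    nlinarith [norm_nonneg g]
  have hmove : x - (z + Rmin • m) = (δ - Rmin) • m := by rw [hxzm]; module
  refine ⟨z + Rmin • m, Rmin, hball, ?_, ?_⟩
  · rw [mem_closedBall, dist_eq_norm, hmove, norm_smul, hm, mul_one,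
      Real.norm_of_nonpos (by linarith)]
    linarith
  have ha : 0 ≤ ⟪g, z - p⟫ := by
    rw [inner_sub_right]
    exact sub_nonneg.mpr (hpmin hzC)
  have hkey := hC.two_mul_inner_add_inner_le_norm hβ hzC hp hm hmC g
  have hΔ : ⟪g, x - p⟫ = ⟪g, z - p⟫ + δ * ⟪g, m⟫ := by
    rw [hxzm, add_sub_right_comm, inner_add_right, real_inner_smul_right]
  rw [sSup_image_inner_sub_closedBall _ _ _ hRmin.le, hmove, real_inner_smul_right, hΔ]
  rcases le_or_gt ⟪g, m⟫ 0 with ht | ht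
  · nlinarith [mul_nonneg_of_nonpos_of_nonpos (by linarith : δ - Rmin ≤ 0) ht]
  · have hκ1 : κ ≤ 1 := by nlinarith
    nlinarith [mul_le_mul_of_nonneg_right (min_le_left _ _ : κ ≤ 2 * β * Rmin) ha,
      mul_le_mul_of_nonneg_right hκ1 (mul_nonneg hδ0 ht.le),
      mul_le_mul_of_nonneg_left hkey hRmin.le]

/-- Uniform ball–gap comparability on all of `C`: if `C` is nonempty, compact and
`β`-strongly convex with diameter `D > 0`, every boundary point admits an inward
unit normal with an inscribed tangent ball of radius `R_min` (and the supporting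
unit normal at each boundary point is unique), then with
`κ = min{2βR_min, R_min/D}`, for every `x ∈ C` and `g ≠ 0` there is a closed ball
`B ⊆ C` containing `x` with `max_{y∈B} ⟨g, x − y⟩ ≥ κ · max_{y∈C} ⟨g, x − y⟩`. -/
theorem uniform_ball_gap_comparability {n : ℕ} (β : ℝ) (hβ : 0 < β)
    (C : Set (EuclideanSpace ℝ (Fin n))) (hne : C.Nonempty) (hcomp : IsCompact C)
    (hC : StronglyConvexSet β C)
    (D : ℝ) (hD : 0 < D) (hdiam : Metric.diam C = D)
    (Rmin : ℝ) (hRmin : 0 < Rmin)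
    (hroll : ∀ z ∈ frontier C, ∃ m : EuclideanSpace ℝ (Fin n), ‖m‖ = 1 ∧
      (∀ y ∈ C, 0 ≤ (inner ℝ m (y - z) : ℝ)) ∧
      Metric.closedBall (z + Rmin • m) Rmin ⊆ C)
    (huniq : ∀ z ∈ frontier C, ∀ m₁ m₂ : EuclideanSpace ℝ (Fin n),
      ‖m₁‖ = 1 → (∀ y ∈ C, 0 ≤ (inner ℝ m₁ (y - z) : ℝ)) →
      ‖m₂‖ = 1 → (∀ y ∈ C, 0 ≤ (inner ℝ m₂ (y - z) : ℝ)) → m₁ = m₂) :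
    ∀ x ∈ C, ∀ g : EuclideanSpace ℝ (Fin n), g ≠ 0 →
      ∃ (c : EuclideanSpace ℝ (Fin n)) (r : ℝ),
        Metric.closedBall c r ⊆ C ∧ x ∈ Metric.closedBall c r ∧
        min (2 * β * Rmin) (Rmin / D) * sSup ((fun y => (inner ℝ g (x - y) : ℝ)) '' C) ≤
          sSup ((fun y => (inner ℝ g (x - y) : ℝ)) '' Metric.closedBall c r) :=
  uniform_ball_gap_comparability_general β hβ C hcomp hC D hdiam Rmin hRmin hroll
end

section
/- Let C ⊆ ℝⁿ be a nonempty compact β-strongly convex set (β > 0), let x ∈ C, let U ⊆ ℝⁿ be a linear subspace with orthogonal projection Π, and let g ∈ ℝⁿ with Πg ≠ 0. Let s be a minimizer of y ↦ ⟨g, y⟩ over C ∩ (x + U), and set d := s − x. Then ⟨g, x − s⟩ ≥ (β/4)·‖Πg‖·‖d‖², and ‖d‖ ≤ 4/β. -/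
open RealInnerProductSpace

theorem Submodule.inner_le_norm_orthogonalProjectionOnto_mul_norm {E : Type*}
    [NormedAddCommGroup E] [InnerProductSpace ℝ E] (U : Submodule ℝ E)
    [U.HasOrthogonalProjection] (g : E) {u : E} (hu : u ∈ U) :
    ⟪g, u⟫ ≤ ‖(U.orthogonalProjectionOnto g : E)‖ * ‖u‖ := by
  rw [← U.inner_orthogonalProjectionOnto_eq_of_mem_right ⟨u, hu⟩]
  exact real_inner_le_norm _ _

namespace StronglyConvexSet

variable {n : ℕ} {β : ℝ} {C : Set (EuclideanSpace ℝ (Fin n))}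

theorem midpoint_add_mem (hC : StronglyConvexSet β C) {x y : EuclideanSpace ℝ (Fin n)}
    (hx : x ∈ C) (hy : y ∈ C) {v : EuclideanSpace ℝ (Fin n)}
    (hv : ‖v‖ ≤ β / 4 * ‖x - y‖ ^ 2) : midpoint ℝ x y + v ∈ C := by
  refine hC x hx y hy (1 / 2) ⟨by norm_num, by norm_num⟩ ?_
  have hcenter : (1 / 2 : ℝ) • x + (1 - 1 / 2 : ℝ) • y = midpoint ℝ x y := by
    rw [midpoint_eq_smul_add]; norm_num
  rw [hcenter, Metric.mem_closedBall, dist_eq_norm, add_sub_cancel_left]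
  linarith

theorem scaling_inequality (hβ : 0 ≤ β) (hC : StronglyConvexSet β C)
    {x s g : EuclideanSpace ℝ (Fin n)} {U : Submodule ℝ (EuclideanSpace ℝ (Fin n))}
    (hx : x ∈ C) (hsC : s ∈ C) (hsU : s - x ∈ U)
    (hmin : ∀ y ∈ C, y - x ∈ U → ⟪g, s⟫ ≤ ⟪g, y⟫) :
    β / 2 * ‖(U.orthogonalProjectionOnto g : EuclideanSpace ℝ (Fin n))‖ * ‖s - x‖ ^ 2 ≤
      ⟪g, x - s⟫ := by
  set p : EuclideanSpace ℝ (Fin n) := (U.orthogonalProjectionOnto g : EuclideanSpace ℝ (Fin n))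
  have hpU : p ∈ U := (U.orthogonalProjectionOnto g).2
  -- `c • p` has length `β/4 ‖s - x‖²`; when `p = 0` the junk value `c = 0` is harmless
  set c : ℝ := β / 4 * ‖s - x‖ ^ 2 / ‖p‖
  have hcp : c * ‖p‖ = β / 4 * ‖s - x‖ ^ 2 * (‖p‖ / ‖p‖) := by simp only [c]; ring
  have hcpp : c * ‖p‖ ^ 2 = β / 4 * ‖s - x‖ ^ 2 * ‖p‖ := by
    rw [pow_two, ← mul_assoc, hcp, mul_assoc, div_self_mul_self]
  have hc : 0 ≤ c := by positivity
  have hyC : midpoint ℝ s x + -(c • p) ∈ C := by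
    refine hC.midpoint_add_mem hsC hx ?_
    rw [norm_neg, norm_smul, Real.norm_of_nonneg hc, hcp]
    exact mul_le_of_le_one_right (by positivity) (div_self_le_one _)
  have hyU : midpoint ℝ s x + -(c • p) - x ∈ U := by
    have : midpoint ℝ s x + -(c • p) - x = (2⁻¹ : ℝ) • (s - x) - c • p := by
      rw [midpoint_eq_smul_add, invOf_eq_inv]; module
    rw [this]
    exact U.sub_mem (U.smul_mem _ hsU) (U.smul_mem _ hpU)
  have hgp : ⟪g, p⟫ = ‖p‖ ^ 2 := by
    rw [← U.inner_orthogonalProjectionOnto_eq_of_mem_right ⟨p, hpU⟩, real_inner_self_eq_norm_sq]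
    rfl
  have hle := hmin _ hyC hyU
  rw [midpoint_eq_smul_add, inner_add_right, inner_neg_right, inner_smul_right, inner_smul_right,
    inner_add_right, hgp] at hle
  rw [inner_sub_right]
  norm_num at hle
  nlinarith

end StronglyConvexSet

theorem subspace_scaling_inequality_general {n : ℕ} (β : ℝ) (hβ : 0 < β)
    (C : Set (EuclideanSpace ℝ (Fin n))) (hC : StronglyConvexSet β C)
    (x : EuclideanSpace ℝ (Fin n)) (hx : x ∈ C)
    (U : Submodule ℝ (EuclideanSpace ℝ (Fin n)))
    (g : EuclideanSpace ℝ (Fin n))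
    (hg : (U.orthogonalProjectionOnto g : EuclideanSpace ℝ (Fin n)) ≠ 0)
    (s : EuclideanSpace ℝ (Fin n)) (hsC : s ∈ C) (hsU : s - x ∈ U)
    (hmin : ∀ y ∈ C, y - x ∈ U → (inner ℝ g s : ℝ) ≤ inner ℝ g y) :
    β / 4 * ‖(U.orthogonalProjectionOnto g : EuclideanSpace ℝ (Fin n))‖ * ‖s - x‖ ^ 2 ≤
        (inner ℝ g (x - s) : ℝ) ∧
      ‖s - x‖ ≤ 4 / β := by
  set P : EuclideanSpace ℝ (Fin n) := (U.orthogonalProjectionOnto g : EuclideanSpace ℝ (Fin n))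
  have hP : 0 < ‖P‖ := norm_pos_iff.mpr hg
  have hlower := hC.scaling_inequality hβ.le hx hsC hsU hmin
  have hupper : inner ℝ g (x - s) ≤ ‖P‖ * ‖s - x‖ := by
    rw [norm_sub_rev]
    exact U.inner_le_norm_orthogonalProjectionOnto_mul_norm g (sub_mem_comm_iff.mp hsU)
  refine ⟨le_trans (by gcongr; norm_num) hlower, ?_⟩
  have hsq : β / 2 * ‖s - x‖ ^ 2 ≤ ‖s - x‖ := le_of_mul_le_mul_left (by nlinarith) hP
  rw [le_div_iff₀ hβ]
  nlinarith [norm_nonneg (s - x)]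

/-- Scaling inequality in the subspace: if `C` is nonempty, compact and
`β`-strongly convex, `x ∈ C`, `U` a linear subspace with orthogonal projection
`Π` and `Πg ≠ 0`, and `s` minimizes `y ↦ ⟨g,y⟩` over the section `C ∩ (x + U)`,
then with `d = s − x`, `⟨g, x − s⟩ ≥ (β/4) ‖Πg‖ ‖d‖²` and `‖d‖ ≤ 4/β`. -/
theorem subspace_scaling_inequality {n : ℕ} (β : ℝ) (hβ : 0 < β)
    (C : Set (EuclideanSpace ℝ (Fin n))) (hne : C.Nonempty) (hcomp : IsCompact C)
    (hC : StronglyConvexSet β C)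
    (x : EuclideanSpace ℝ (Fin n)) (hx : x ∈ C)
    (U : Submodule ℝ (EuclideanSpace ℝ (Fin n)))
    (g : EuclideanSpace ℝ (Fin n))
    (hg : (U.orthogonalProjectionOnto g : EuclideanSpace ℝ (Fin n)) ≠ 0)
    (s : EuclideanSpace ℝ (Fin n)) (hsC : s ∈ C) (hsU : s - x ∈ U)
    (hmin : ∀ y ∈ C, y - x ∈ U → (inner ℝ g s : ℝ) ≤ inner ℝ g y) :
    β / 4 * ‖(U.orthogonalProjectionOnto g : EuclideanSpace ℝ (Fin n))‖ * ‖s - x‖ ^ 2 ≤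
        (inner ℝ g (x - s) : ℝ) ∧
      ‖s - x‖ ≤ 4 / β :=
  subspace_scaling_inequality_general β hβ C hC x hx U g hg s hsC hsU hmin
end

section
/- Let C ⊆ ℝⁿ be a nonempty compact β-strongly convex set (β > 0) and let ε > 0. Define the parallel body C_ε := C + εB, where B is the closed Euclidean unit ball. Then: (1) C_ε is β_ε-strongly convex with β_ε = β/(1 + 2εβ); (2) the Hausdorff distance between C and C_ε is at most ε; and (3) C_ε satisfies a two-sided rolling-ball condition of radius ε: for every boundary point y ∈ ∂C_ε there exists a unit vector ν such that the closed ball of center y − εν and radius ε is contained in C_ε while the open ball of center y + εν and radius ε is disjoint from C_ε. -/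
open scoped Pointwise

/-- The parallel body `C_ε = C + εB`, `B` the closed Euclidean unit ball. -/
def parallelBody {n : ℕ} (C : Set (EuclideanSpace ℝ (Fin n))) (ε : ℝ) :
    Set (EuclideanSpace ℝ (Fin n)) :=
  C + Metric.closedBall (0 : EuclideanSpace ℝ (Fin n)) ε

open Metric Set
open scoped RealInnerProductSpace

section Aux

variable {E : Type*} [NormedAddCommGroup E] [InnerProductSpace ℝ E]

lemma aux_sq_ineq (a s R : ℝ) (ha0 : 0 ≤ a) (hs0 : 0 ≤ s) (h1 : 0 ≤ R - s)
    (ha2 : a ^ 2 ≤ R ^ 2 - 2 * R * s) : a ≤ R - s := by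
  nlinarith [sq_nonneg s]

lemma comb_norm_sq (u v : E) (l : ℝ) :
    ‖l • u + (1 - l) • v‖ ^ 2
      = l * ‖u‖ ^ 2 + (1 - l) * ‖v‖ ^ 2 - l * (1 - l) * ‖u - v‖ ^ 2 := by
  have h : ∀ w : E, ‖w‖ ^ 2 = ⟪w, w⟫ := fun w => (real_inner_self_eq_norm_sq w).symm
  simp only [h, inner_add_left, inner_add_right, inner_sub_left, inner_sub_right,
    real_inner_smul_left, real_inner_smul_right]
  rw [real_inner_comm v u]
  ring

/-- Closed balls of radius `R` are `1/(2R)`-strongly convex. -/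
lemma ball_strong (p : E) (R : ℝ) (hR : 0 < R) {x y : E}
    (hx : x ∈ closedBall p R) (hy : y ∈ closedBall p R) {l : ℝ} (hl : l ∈ Icc (0:ℝ) 1)
    {z : E} (hz : dist z (l • x + (1 - l) • y) ≤ 1 / (2 * R) * (l * (1 - l)) * ‖x - y‖ ^ 2) :
    z ∈ closedBall p R := by
  obtain ⟨hl0, hl1⟩ := hl
  rw [mem_closedBall, dist_eq_norm] at hx hy ⊢
  set u := x - p with hu
  set v := y - p with hv
  have hmp : l • x + (1 - l) • y - p = l • u + (1 - l) • v := by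
    rw [hu, hv]; module
  have huv : x - y = u - v := by rw [hu, hv]; abel
  have hsq : ‖l • u + (1 - l) • v‖ ^ 2
      = l * ‖u‖ ^ 2 + (1 - l) * ‖v‖ ^ 2 - l * (1 - l) * ‖u - v‖ ^ 2 := comb_norm_sq u v l
  set t := l * (1 - l) * ‖u - v‖ ^ 2 with ht
  have ht0 : 0 ≤ t := mul_nonneg (mul_nonneg hl0 (by linarith)) (sq_nonneg _)
  have ha0 : (0:ℝ) ≤ ‖l • u + (1 - l) • v‖ := norm_nonneg _
  have ha2 : ‖l • u + (1 - l) • v‖ ^ 2 ≤ R ^ 2 - t := by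
    rw [hsq]
    have h1 : ‖u‖ ^ 2 ≤ R ^ 2 := pow_le_pow_left₀ (norm_nonneg u) hx 2
    have h2 : ‖v‖ ^ 2 ≤ R ^ 2 := pow_le_pow_left₀ (norm_nonneg v) hy 2
    nlinarith [sq_nonneg ‖u‖, sq_nonneg ‖v‖]
  have htR : t ≤ R ^ 2 := by
    have h4 : ‖u - v‖ ≤ 2 * R := by
      calc ‖u - v‖ ≤ ‖u‖ + ‖v‖ := norm_sub_le u v
        _ ≤ 2 * R := by linarith
    have h5 : ‖u - v‖ ^ 2 ≤ (2 * R) ^ 2 := pow_le_pow_left₀ (norm_nonneg _) h4 2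
    have h6 : l * (1 - l) ≤ 1 / 4 := by nlinarith [sq_nonneg (2 * l - 1)]
    have h7 : (0:ℝ) ≤ ‖u - v‖ ^ 2 := sq_nonneg _
    rw [ht]
    nlinarith
  have htri : ‖z - p‖ ≤ dist z (l • x + (1 - l) • y) + ‖l • u + (1 - l) • v‖ := by
    rw [dist_eq_norm, ← hmp]
    calc ‖z - p‖ = ‖(z - (l • x + (1 - l) • y)) + (l • x + (1 - l) • y - p)‖ := by abel_nf
      _ ≤ _ := norm_add_le _ _
  have hz' : dist z (l • x + (1 - l) • y) ≤ 1 / (2 * R) * t := by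
    rw [ht, ← huv]; linarith [hz]
  -- show 1/(2R) * t + a ≤ R where a^2 ≤ R^2 - t
  set a := ‖l • u + (1 - l) • v‖ with hadef
  set s := 1 / (2 * R) * t with hsdef
  have hts : t = 2 * R * s := by
    rw [hsdef]; field_simp
  have hs0 : 0 ≤ s := by
    rw [hsdef]; positivity
  have h1 : 0 ≤ R - s := by
    rw [hsdef, div_mul_eq_mul_div, one_mul, sub_nonneg, div_le_iff₀ (by linarith)]
    nlinarith
  have ha2' : a ^ 2 ≤ R ^ 2 - 2 * R * s := by rw [← hts]; exact ha2
  have key : a ≤ R - s := aux_sq_ineq a s R ha0 hs0 h1 ha2'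
  linarith

end Aux

section Euc

variable {n : ℕ}

local notation "E" => EuclideanSpace ℝ (Fin n)

lemma StronglyConvexSet.convex {β : ℝ} (hβ : 0 < β) {C : Set E}
    (hC : StronglyConvexSet β C) : Convex ℝ C := by
  intro x hx y hy a b ha hb hab
  have hb' : b = 1 - a := by linarith
  subst hb'
  exact hC x hx y hy a ⟨ha, by linarith⟩
    (mem_closedBall_self (by positivity))

/-- The supporting-ball property of strongly convex sets: if `ν` is an outward
normal at `c ∈ C`, then `C` is contained in the ball of radius `1/(2β)` tangent
at `c` from inside. -/
lemma supporting_ball {β : ℝ} (hβ : 0 < β) {C : Set E}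
    (hC : StronglyConvexSet β C) {c : E} (hc : c ∈ C) {ν : E} (hν : ‖ν‖ = 1)
    (hsupp : ∀ x ∈ C, ⟪x - c, ν⟫ ≤ 0) :
    C ⊆ closedBall (c - (1 / (2 * β)) • ν) (1 / (2 * β)) := by
  intro x hx
  -- step 1: strengthened support inequality
  have key : ∀ l ∈ Set.Ioo (0:ℝ) 1, ⟪x - c, ν⟫ ≤ -(β * (1 - l) * ‖x - c‖ ^ 2) := by
    intro l hl
    set r := β * (l * (1 - l)) * ‖x - c‖ ^ 2 with hr
    have hr0 : 0 ≤ r :=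
      mul_nonneg (mul_nonneg hβ.le (mul_nonneg hl.1.le (by linarith [hl.2]))) (sq_nonneg _)
    have hq : l • x + (1 - l) • c + r • ν ∈ C := by
      apply hC x hx c hc l ⟨hl.1.le, hl.2.le⟩
      rw [mem_closedBall, dist_eq_norm]
      have : l • x + (1 - l) • c + r • ν - (l • x + (1 - l) • c) = r • ν := by abel
      rw [this, norm_smul, hν, Real.norm_eq_abs, abs_of_nonneg hr0, mul_one]
    have h0 := hsupp _ hq
    have hdec : l • x + (1 - l) • c + r • ν - c = l • (x - c) + r • ν := by module
    rw [hdec, inner_add_left, real_inner_smul_left, real_inner_smul_left,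
      real_inner_self_eq_norm_sq, hν] at h0
    have h0' : l * ⟪x - c, ν⟫ + r ≤ 0 := by nlinarith
    rw [hr] at h0'
    have hl0 : 0 < l := hl.1
    nlinarith
  have key2 : ⟪x - c, ν⟫ ≤ -(β * ‖x - c‖ ^ 2) := by
    have K0 : 0 ≤ β * ‖x - c‖ ^ 2 := by positivity
    refine le_of_forall_pos_le_add fun δ hδ => ?_
    set l := min (1/2) (δ / (β * ‖x - c‖ ^ 2 + 1)) with hldef
    have hK1 : 0 < β * ‖x - c‖ ^ 2 + 1 := by linarith
    have hl1 : 0 < l := lt_min (by norm_num) (div_pos hδ hK1)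
    have hl2 : l < 1 := lt_of_le_of_lt (min_le_left _ _) (by norm_num)
    have h := key l ⟨hl1, hl2⟩
    have hle : l * (β * ‖x - c‖ ^ 2) ≤ δ := by
      calc l * (β * ‖x - c‖ ^ 2) ≤ (δ / (β * ‖x - c‖ ^ 2 + 1)) * (β * ‖x - c‖ ^ 2) := by
            apply mul_le_mul_of_nonneg_right (min_le_right _ _) K0
        _ ≤ (δ / (β * ‖x - c‖ ^ 2 + 1)) * (β * ‖x - c‖ ^ 2 + 1) := by
            apply mul_le_mul_of_nonneg_left (by linarith) (le_of_lt (div_pos hδ hK1))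
        _ = δ := div_mul_cancel₀ δ (ne_of_gt hK1)
    nlinarith
  -- step 2: conclude membership in the ball
  rw [mem_closedBall, dist_eq_norm]
  have hR : 0 < 1 / (2 * β) := by positivity
  have hdec : x - (c - (1 / (2 * β)) • ν) = (x - c) + (1 / (2 * β)) • ν := by module
  rw [hdec]
  have hsq : ‖(x - c) + (1 / (2 * β)) • ν‖ ^ 2
      = ‖x - c‖ ^ 2 + 2 * (1 / (2 * β)) * ⟪x - c, ν⟫ + (1 / (2 * β)) ^ 2 := by
    rw [@norm_add_sq_real, real_inner_smul_right, norm_smul, Real.norm_eq_abs,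
      abs_of_pos hR, hν, mul_one]
    ring
  have hle : ‖(x - c) + (1 / (2 * β)) • ν‖ ^ 2 ≤ (1 / (2 * β)) ^ 2 := by
    rw [hsq]
    have h2 : 2 * (1 / (2 * β)) * ⟪x - c, ν⟫ ≤ 2 * (1 / (2 * β)) * (-(β * ‖x - c‖ ^ 2)) :=
      mul_le_mul_of_nonneg_left key2 (by positivity)
    have h3 : 2 * (1 / (2 * β)) * (β * ‖x - c‖ ^ 2) = ‖x - c‖ ^ 2 := by
      field_simp
    nlinarith
  nlinarith [norm_nonneg ((x - c) + (1 / (2 * β)) • ν)]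

lemma mem_parallelBody_iff {C : Set E} (hcomp : IsCompact C) (hne : C.Nonempty)
    {ε : ℝ} (hε : 0 ≤ ε) {z : E} :
    z ∈ parallelBody C ε ↔ Metric.infDist z C ≤ ε := by
  constructor
  · rintro ⟨c, hc, b, hb, rfl⟩
    calc Metric.infDist (c + b) C ≤ dist (c + b) c := Metric.infDist_le_dist_of_mem hc
      _ = ‖b‖ := by rw [dist_eq_norm, add_sub_cancel_left]
      _ ≤ ε := by rwa [mem_closedBall, dist_zero_right] at hb
  · intro h
    obtain ⟨c, hcC, hdist⟩ := hcomp.exists_infDist_eq_dist hne z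
    refine ⟨c, hcC, z - c, ?_, by module⟩
    rw [mem_closedBall, dist_zero_right, ← dist_eq_norm]
    rw [hdist] at h
    exact h

lemma isClosed_parallelBody {C : Set E} (hcomp : IsCompact C) (hne : C.Nonempty)
    {ε : ℝ} (hε : 0 ≤ ε) : IsClosed (parallelBody C ε) := by
  have : parallelBody C ε = {z : E | Metric.infDist z C ≤ ε} := by
    ext z; exact mem_parallelBody_iff hcomp hne hε
  rw [this]
  exact isClosed_le (Metric.continuous_infDist_pt C) continuous_const

/-- The variational inequality for the nearest point on a convex compact set. -/
lemma nearest_obtuse {C : Set E} (hconv : Convex ℝ C) {z c : E} (hc : c ∈ C)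
    (hd : Metric.infDist z C = dist z c) : ∀ x ∈ C, ⟪z - c, x - c⟫ ≤ 0 := by
  have hne : C.Nonempty := ⟨c, hc⟩
  have h : ‖z - c‖ = ⨅ w : C, ‖z - w‖ := by
    rw [← dist_eq_norm, ← hd, Metric.infDist_eq_iInf]
    simp_rw [dist_eq_norm]
  exact (norm_eq_iInf_iff_real_inner_le_zero hconv hc).mp h

/-- The parallel body is contained in the enlarged supporting ball. -/
lemma parallel_subset_ball {β : ℝ} (hβ : 0 < β) {C : Set E}
    (hC : StronglyConvexSet β C) {c : E} (hc : c ∈ C) {ν : E} (hν : ‖ν‖ = 1)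
    (hsupp : ∀ x ∈ C, ⟪x - c, ν⟫ ≤ 0) {ε : ℝ} (hε : 0 ≤ ε) :
    parallelBody C ε ⊆ closedBall (c - (1 / (2 * β)) • ν) (1 / (2 * β) + ε) := by
  rintro w ⟨a, ha, b, hb, rfl⟩
  have h1 : a ∈ closedBall (c - (1 / (2 * β)) • ν) (1 / (2 * β)) :=
    supporting_ball hβ hC hc hν hsupp ha
  rw [mem_closedBall] at h1 ⊢
  calc dist (a + b) (c - (1 / (2 * β)) • ν)
      ≤ dist (a + b) a + dist a (c - (1 / (2 * β)) • ν) := dist_triangle _ _ _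
    _ ≤ ε + (1 / (2 * β)) := by
        have : dist (a + b) a = ‖b‖ := by rw [dist_eq_norm, add_sub_cancel_left]
        rw [this]
        rw [mem_closedBall, dist_zero_right] at hb
        linarith
    _ = 1 / (2 * β) + ε := by ring

end Euc

/-- Outer parallel regularization: for a nonempty compact `β`-strongly convex set
`C` and `ε > 0`, the parallel body `C_ε = C + εB` is `β/(1+2εβ)`-strongly convex,
is within Hausdorff distance `ε` of `C`, and satisfies a two-sided rolling-ball
condition of radius `ε` at every boundary point. -/
theorem parallel_regularization {n : ℕ} (β : ℝ) (hβ : 0 < β)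
    (C : Set (EuclideanSpace ℝ (Fin n))) (hne : C.Nonempty) (hcomp : IsCompact C)
    (hC : StronglyConvexSet β C) (ε : ℝ) (hε : 0 < ε) :
    StronglyConvexSet (β / (1 + 2 * ε * β)) (parallelBody C ε) ∧
    Metric.hausdorffDist C (parallelBody C ε) ≤ ε ∧
    ∀ y ∈ frontier (parallelBody C ε),
      ∃ ν : EuclideanSpace ℝ (Fin n), ‖ν‖ = 1 ∧
        Metric.closedBall (y - ε • ν) ε ⊆ parallelBody C ε ∧
        Disjoint (Metric.ball (y + ε • ν) ε) (parallelBody C ε) := by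
  have hconv : Convex ℝ C := hC.convex hβ
  have hcoef : β / (1 + 2 * ε * β) = 1 / (2 * (1 / (2 * β) + ε)) := by
    rw [div_eq_div_iff (by positivity) (by positivity)]
    field_simp
  refine ⟨?_, ?_, ?_⟩
  · -- strong convexity of the parallel body
    intro x hx y hy l hl z hz
    rw [mem_parallelBody_iff hcomp hne hε.le]
    by_contra hcon
    push_neg at hcon
    obtain ⟨c, hcC, hdist⟩ := hcomp.exists_infDist_eq_dist hne z
    have hd : ε < dist z c := by rwa [hdist] at hcon
    have hd0 : 0 < dist z c := lt_trans hε hd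
    set d := dist z c with hddef
    set ν : EuclideanSpace ℝ (Fin n) := d⁻¹ • (z - c) with hν
    have hnν : ‖ν‖ = 1 := by
      rw [hν, norm_smul, Real.norm_eq_abs, abs_of_pos (inv_pos.mpr hd0), ← dist_eq_norm,
        ← hddef, inv_mul_cancel₀ (ne_of_gt hd0)]
    have hsupp : ∀ x' ∈ C, ⟪x' - c, ν⟫ ≤ 0 := by
      intro x' hx'
      have h := nearest_obtuse hconv hcC hdist x' hx'
      rw [hν, real_inner_smul_right]
      have : ⟪x' - c, z - c⟫ ≤ 0 := by rwa [real_inner_comm] at h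
      exact mul_nonpos_of_nonneg_of_nonpos (le_of_lt (inv_pos.mpr hd0)) this
    set R := 1 / (2 * β) with hR
    have hRpos : 0 < R := by positivity
    have hsub := parallel_subset_ball hβ hC hcC hnν hsupp hε.le
    have hzball : z ∈ Metric.closedBall (c - R • ν) (R + ε) := by
      apply ball_strong (c - R • ν) (R + ε) (by linarith) (hsub hx) (hsub hy) hl
      rw [← hcoef]
      exact hz
    have hzc : z - c = d • ν := by
      rw [hν, smul_smul, mul_inv_cancel₀ (ne_of_gt hd0), one_smul]
    have : dist z (c - R • ν) = d + R := by
      rw [dist_eq_norm]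
      have h1 : z - (c - R • ν) = (d + R) • ν := by
        rw [add_smul, ← hzc]; module
      rw [h1, norm_smul, hnν, mul_one, Real.norm_eq_abs, abs_of_pos (by linarith)]
    rw [Metric.mem_closedBall, this] at hzball
    linarith
  · -- Hausdorff distance bound
    apply Metric.hausdorffDist_le_of_mem_dist hε.le
    · intro x hx
      refine ⟨x, ⟨x, hx, 0, ?_, by module⟩, by simp [hε.le]⟩
      simp [hε.le]
    · rintro _ ⟨c, hc, b, hb, rfl⟩
      refine ⟨c, hc, ?_⟩
      rw [mem_closedBall, dist_zero_right] at hb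
      calc dist (c + b) c = ‖b‖ := by rw [dist_eq_norm, add_sub_cancel_left]
        _ ≤ ε := hb
  · -- rolling ball condition
    intro y hy
    have hyC : y ∈ parallelBody C ε :=
      (isClosed_parallelBody hcomp hne hε.le).closure_subset
        ((frontier_subset_closure) hy)
    have hle : Metric.infDist y C ≤ ε := (mem_parallelBody_iff hcomp hne hε.le).mp hyC
    have heq : Metric.infDist y C = ε := by
      by_contra hne'
      have hlt : Metric.infDist y C < ε := lt_of_le_of_ne hle hne'
      have hyint : y ∈ interior (parallelBody C ε) := by
        have hsub : Metric.ball y (ε - Metric.infDist y C) ⊆ parallelBody C ε := by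
          intro w hw
          rw [mem_parallelBody_iff hcomp hne hε.le]
          calc Metric.infDist w C ≤ Metric.infDist y C + dist w y :=
                Metric.infDist_le_infDist_add_dist
            _ ≤ Metric.infDist y C + (ε - Metric.infDist y C) := by
                rw [Metric.mem_ball] at hw; linarith
            _ = ε := by ring
        exact interior_maximal hsub Metric.isOpen_ball (Metric.mem_ball_self (by linarith))
      exact hy.2 hyint
    obtain ⟨c, hcC, hdist⟩ := hcomp.exists_infDist_eq_dist hne y
    have hyc : dist y c = ε := by rw [← hdist, heq]
    set ν : EuclideanSpace ℝ (Fin n) := ε⁻¹ • (y - c) with hν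
    have hnν : ‖ν‖ = 1 := by
      rw [hν, norm_smul, Real.norm_eq_abs, abs_of_pos (inv_pos.mpr hε), ← dist_eq_norm,
        hyc, inv_mul_cancel₀ (ne_of_gt hε)]
    have hεν : ε • ν = y - c := by
      rw [hν, smul_smul, mul_inv_cancel₀ (ne_of_gt hε), one_smul]
    refine ⟨ν, hnν, ?_, ?_⟩
    · -- inner rolling ball
      have hcenter : y - ε • ν = c := by rw [hεν]; module
      rw [hcenter]
      intro w hw
      refine ⟨c, hcC, w - c, ?_, by module⟩
      rw [mem_closedBall, dist_zero_right, ← dist_eq_norm]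
      rwa [mem_closedBall] at hw
    · -- outer rolling ball
      have hsupp : ∀ x' ∈ C, ⟪x' - c, ν⟫ ≤ 0 := by
        intro x' hx'
        have h := nearest_obtuse hconv hcC hdist x' hx'
        rw [hν, real_inner_smul_right]
        have : ⟪x' - c, y - c⟫ ≤ 0 := by rwa [real_inner_comm] at h
        exact mul_nonpos_of_nonneg_of_nonpos (le_of_lt (inv_pos.mpr hε)) this
      set R := 1 / (2 * β) with hR
      have hRpos : 0 < R := by positivity
      have hsub := parallel_subset_ball hβ hC hcC hnν hsupp hε.le
      rw [Set.disjoint_left]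
      intro z hz1 hz2
      have h2 := hsub hz2
      rw [Metric.mem_closedBall] at h2
      have hcent : y + ε • ν = c + (2 * ε) • ν := by
        rw [two_mul, add_smul, hεν]; module
      have hfar : dist (c + (2 * ε) • ν) (c - R • ν) = 2 * ε + R := by
        rw [dist_eq_norm]
        have h1 : c + (2 * ε) • ν - (c - R • ν) = (2 * ε + R) • ν := by
          rw [add_smul]; module
        rw [h1, norm_smul, hnν, mul_one, Real.norm_eq_abs, abs_of_pos (by linarith)]
      have hz1' : dist z (y + ε • ν) < ε := hz1
      rw [hcent, dist_comm] at hz1'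
      have htri : (2 * ε + R : ℝ) ≤ dist (c + (2 * ε) • ν) z + dist z (c - R • ν) := by
        calc (2 * ε + R : ℝ) = dist (c + (2 * ε) • ν) (c - R • ν) := hfar.symm
          _ ≤ dist (c + (2 * ε) • ν) z + dist z (c - R • ν) := dist_triangle _ _ _
      linarith
end

section
/- Let (Ω, F, P) be a probability space with a filtration (F_k)_{k≥0}, and let (h_k)_{k≥0} be a sequence of nonnegative real random variables adapted to the filtration, with h₀ a deterministic constant. Assume there is r ∈ (0,1) such that E[h_{k+1} | F_k] ≤ (1 − r)·h_k almost surely for every k ≥ 0. Then for every θ ∈ (0, r) and every ξ ∈ (0,1), with probability at least 1 − ξ one has h_k ≤ (h₀/ξ)·(1 − θ)^k simultaneously for all k ≥ 0. -/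
/-!
Rescaling by `(1 - θ)⁻¹ ^ k` turns `h` into a nonnegative supermartingale `g` with `g 0 = h₀`
(the contraction factor `1 - r` is at most `1 - θ`). By Ville's maximal inequality, obtained
from optional stopping at the first time `g` exceeds a level, `g` stays below `h₀ / ξ` for all
times outside an event of probability at most `ξ`; there `h k ≤ (h₀ / ξ) (1 - θ) ^ k`.
-/

open MeasureTheory

namespace MeasureTheory

variable {Ω : Type*} {m0 : MeasurableSpace Ω} {μ : Measure Ω} [IsFiniteMeasure μ]
  {ℱ : Filtration ℕ m0}

theorem supermartingale_pow_inv_smul_of_condExp_le {h : ℕ → Ω → ℝ} {q : ℝ} (hq : 0 < q)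
    (hadapt : Adapted ℱ h) (hint : ∀ k, Integrable (h k) μ)
    (hdec : ∀ k, ∀ᵐ ω ∂μ, (μ[h (k + 1) | ℱ k]) ω ≤ q * h k ω) :
    Supermartingale (fun k => q⁻¹ ^ k • h k) ℱ μ := by
  have hadapt' : Adapted ℱ fun k => q⁻¹ ^ k • h k := fun k => (hadapt k).const_smul _
  refine supermartingale_nat hadapt'.stronglyAdapted (fun k => (hint k).smul _) fun k => ?_
  filter_upwards [condExp_smul (μ := μ) (m := ℱ k) (q⁻¹ ^ (k + 1)) (h (k + 1)), hdec k]
    with ω hsmul hle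
  simp only [hsmul, Pi.smul_apply, smul_eq_mul]
  calc q⁻¹ ^ (k + 1) * (μ[h (k + 1)|ℱ k]) ω ≤ q⁻¹ ^ (k + 1) * (q * h k ω) := by gcongr
    _ = q⁻¹ ^ k * (q⁻¹ * q) * h k ω := by ring
    _ = q⁻¹ ^ k * h k ω := by rw [inv_mul_cancel₀ hq.ne', mul_one]

namespace Supermartingale

variable {g : ℕ → Ω → ℝ}

theorem mul_measureReal_exists_le_le_integral (hg : Supermartingale g ℱ μ) (hnonneg : 0 ≤ g)
    (ε : ℝ) (n : ℕ) : ε * μ.real {ω | ∃ k ≤ n, ε ≤ g k ω} ≤ ∫ ω, g 0 ω ∂μ := by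
  set τ : Ω → WithTop ℕ := fun ω => (hittingBtwn g (Set.Ici ε) 0 n ω : ℕ)
  have hτ : IsStoppingTime ℱ τ :=
    hg.stronglyAdapted.adapted.isStoppingTime_hittingBtwn measurableSet_Ici
  have hτn : ∀ ω, τ ω ≤ n := fun ω => WithTop.coe_le_coe.2 (hittingBtwn_le ω)
  have hint : Integrable (stoppedValue g τ) μ := integrable_stoppedValue ℕ hτ hg.integrable hτn
  have hB : MeasurableSet {ω | ∃ k ≤ n, ε ≤ g k ω} := by
    have hB_eq : {ω | ∃ k ≤ n, ε ≤ g k ω} = ⋃ k ≤ n, {ω | ε ≤ g k ω} := by ext; simp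
    exact hB_eq ▸ .biUnion (Set.to_countable _) fun k _ =>
      measurableSet_le measurable_const ((hg.stronglyMeasurable k).measurable.le (ℱ.le k))
  have hstop : ∫ ω, stoppedValue g τ ω ∂μ ≤ ∫ ω, g 0 ω ∂μ := by
    have := hg.neg.expected_stoppedValue_mono (isStoppingTime_const ℱ 0) hτ
      (fun ω => WithTop.coe_le_coe.2 (Nat.zero_le _)) hτn
    simpa [stoppedValue, integral_neg] using this
  calc ε * μ.real {ω | ∃ k ≤ n, ε ≤ g k ω}
      ≤ ∫ ω in {ω | ∃ k ≤ n, ε ≤ g k ω}, stoppedValue g τ ω ∂μ :=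
        setIntegral_ge_of_const_le_real hB (measure_ne_top _ _)
          (fun _ ⟨k, hk, hgk⟩ => stoppedValue_hittingBtwn_mem ⟨k, ⟨k.zero_le, hk⟩, hgk⟩)
          hint.integrableOn
    _ ≤ ∫ ω, stoppedValue g τ ω ∂μ :=
        setIntegral_le_integral hint (ae_of_all _ fun ω => hnonneg _ ω)
    _ ≤ ∫ ω, g 0 ω ∂μ := hstop

theorem measure_exists_lt_le (hg : Supermartingale g ℱ μ) (hnonneg : 0 ≤ g) {ε ξ : ℝ} (hξ : 0 < ξ)
    (h0 : ∫ ω, g 0 ω ∂μ ≤ ε * ξ) : μ {ω | ∃ k, ε < g k ω} ≤ ENNReal.ofReal ξ := by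
  have hε : 0 ≤ ε := nonneg_of_mul_nonneg_left ((integral_nonneg (hnonneg 0)).trans h0) hξ
  -- The levels `ε + 1 / (n + 1)` stay positive even when `ε = 0`.
  set B : ℕ → Set Ω := fun n => {ω | ∃ k ≤ n, ε + 1 / (n + 1) ≤ g k ω}
  have hB_mono : Monotone B := fun n n' hmn ω ⟨k, hk, hgk⟩ =>
    ⟨k, hk.trans hmn, (add_le_add le_rfl (Nat.one_div_le_one_div hmn)).trans hgk⟩
  have hsub : {ω | ∃ k, ε < g k ω} ⊆ ⋃ n, B n := by
    rintro ω ⟨k, hk⟩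
    obtain ⟨m, hm⟩ := exists_nat_one_div_lt (sub_pos.2 hk)
    refine Set.mem_iUnion.2 ⟨max k m, k, le_max_left k m, ?_⟩
    linarith [Nat.one_div_le_one_div (α := ℝ) (le_max_right k m)]
  refine (measure_mono hsub).trans ?_
  rw [hB_mono.measure_iUnion]
  refine iSup_le fun n => (ENNReal.le_ofReal_iff_toReal_le (measure_ne_top _ _) hξ.le).2 ?_
  have hεn : 0 < ε + 1 / (n + 1) := by positivity
  refine le_of_mul_le_mul_left ?_ hεn
  calc (ε + 1 / (n + 1)) * μ.real (B n) ≤ ∫ ω, g 0 ω ∂μ :=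
        mul_measureReal_exists_le_le_integral hg hnonneg _ n
    _ ≤ (ε + 1 / (n + 1)) * ξ :=
        h0.trans (by gcongr; exact le_add_of_nonneg_right (by positivity))

end Supermartingale

end MeasureTheory

theorem high_probability_geometric_convergence_general
    {Ω : Type*} [m0 : MeasurableSpace Ω] (μ : Measure Ω) [IsProbabilityMeasure μ]
    (ℱ : Filtration ℕ m0) (h : ℕ → Ω → ℝ)
    (hadapt : Adapted ℱ h)
    (hnn : ∀ k ω, 0 ≤ h k ω)
    (hint : ∀ k, Integrable (h k) μ)
    (c₀ : ℝ) (h₀ : ∀ ω, h 0 ω = c₀)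
    (r : ℝ) (hr1 : r < 1)
    (hdec : ∀ k, ∀ᵐ ω ∂μ, (μ[h (k + 1) | ℱ k]) ω ≤ (1 - r) * h k ω) :
    ∀ θ : ℝ, 0 < θ → θ < r → ∀ ξ : ℝ, 0 < ξ → ξ < 1 →
      ENNReal.ofReal (1 - ξ) ≤ μ {ω | ∀ k : ℕ, h k ω ≤ c₀ / ξ * (1 - θ) ^ k} := by
  intro θ _ hθr ξ hξ _
  have hθ1 : 0 < 1 - θ := by linarith
  set g : ℕ → Ω → ℝ := fun k => (1 - θ)⁻¹ ^ k • h k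
  have hg : Supermartingale g ℱ μ :=
    supermartingale_pow_inv_smul_of_condExp_le hθ1 hadapt hint fun k => (hdec k).mono
      fun ω hω => hω.trans (mul_le_mul_of_nonneg_right (by linarith) (hnn k ω))
  have hg_nonneg : 0 ≤ g := fun k ω => mul_nonneg (pow_nonneg (inv_nonneg.2 hθ1.le) k) (hnn k ω)
  have hg_zero : ∫ ω, g 0 ω ∂μ = c₀ / ξ * ξ := by
    simp [g, h₀, div_mul_cancel₀ c₀ hξ.ne']
  set bad := {ω | ∃ k, c₀ / ξ < g k ω}
  have hgood : badᶜ ⊆ {ω | ∀ k : ℕ, h k ω ≤ c₀ / ξ * (1 - θ) ^ k} := by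
    intro ω hω k
    have hgk : (1 - θ)⁻¹ ^ k * h k ω ≤ c₀ / ξ := not_lt.1 fun hlt => hω ⟨k, hlt⟩
    rw [inv_pow, inv_mul_le_iff₀ (by positivity)] at hgk
    linarith
  calc ENNReal.ofReal (1 - ξ) = 1 - ENNReal.ofReal ξ := by
        rw [ENNReal.ofReal_sub 1 hξ.le, ENNReal.ofReal_one]
    _ ≤ 1 - μ bad := by gcongr; exact hg.measure_exists_lt_le hg_nonneg hξ hg_zero.le
    _ ≤ μ badᶜ := tsub_le_iff_left.2 (by simpa using measure_univ_le_add_compl (μ := μ) bad)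
    _ ≤ _ := measure_mono hgood

/-- High-probability geometric convergence: if `(h_k)` is nonnegative, adapted,
integrable, `h₀ ≡ c₀` is a deterministic constant, and
`E[h_{k+1} | F_k] ≤ (1 − r) h_k` a.s. for some `r ∈ (0,1)`, then for every
`θ ∈ (0,r)` and `ξ ∈ (0,1)`, with probability at least `1 − ξ`,
`h_k ≤ (h₀/ξ)(1 − θ)^k` simultaneously for all `k ≥ 0`. -/
theorem high_probability_geometric_convergence
    {Ω : Type*} [m0 : MeasurableSpace Ω] (μ : Measure Ω) [IsProbabilityMeasure μ]
    (ℱ : Filtration ℕ m0) (h : ℕ → Ω → ℝ)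
    (hadapt : Adapted ℱ h)
    (hnn : ∀ k ω, 0 ≤ h k ω)
    (hint : ∀ k, Integrable (h k) μ)
    (c₀ : ℝ) (h₀ : ∀ ω, h 0 ω = c₀)
    (r : ℝ) (hr0 : 0 < r) (hr1 : r < 1)
    (hdec : ∀ k, ∀ᵐ ω ∂μ, (μ[h (k + 1) | ℱ k]) ω ≤ (1 - r) * h k ω) :
    ∀ θ : ℝ, 0 < θ → θ < r → ∀ ξ : ℝ, 0 < ξ → ξ < 1 →
      ENNReal.ofReal (1 - ξ) ≤ μ {ω | ∀ k : ℕ, h k ω ≤ c₀ / ξ * (1 - θ) ^ k} :=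
  high_probability_geometric_convergence_general (m0 := m0) μ ℱ h hadapt hnn hint c₀ h₀ r hr1 hdec
end
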